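/- arXiv:1003.4561 — 5 statements merged into one kernel-verified Lean document; each statement's English description precedes it below -/
import Mathlib

section
/- For every positive integer k, there exists a set S ⊆ ℤ such that S can be written as a union of 2^k sets each of which is a B₂[2^(k-1)] set, but for every positive integer g' there do not exist 2^k − 1 B₂[g'] sets whose union equals S. -/
/-- `S ⊆ ℤ` is a `B₂[g]` set: every integer has at most `g` representations as a sum
`a + b` with `a, b ∈ S`, counting representations differing only in order as one
(formalized via unordered pairs `Sym2`). -/
def IsB2 {G : Type} [AddCommGroup G] (g : ℕ) (S : Set G) : Prop :=
  ∀ ξ : G, {p : Sym2 G | ∃ a ∈ S, ∃ b ∈ S, p = s(a, b) ∧ a + b = ξ}.encard ≤ g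

namespace B2Proof

/-- sign of a boolean: `false ↦ 1`, `true ↦ -1`. -/
def sgn (b : Bool) : ℤ := if b then -1 else 1

/-- constant part: `false ↦ 0`, `true ↦ 1`. -/
def cst (b : Bool) : ℤ := if b then 1 else 0

lemma abs_sgn (b : Bool) : |sgn b| = 1 := by cases b <;> simp [sgn]

lemma sgn_ne_zero (b : Bool) : sgn b ≠ 0 := by cases b <;> simp [sgn]

lemma sgn_inj {b b' : Bool} (h : sgn b = sgn b') : b = b' := by
  cases b <;> cases b' <;> simp_all [sgn]

/-- the base -/
def MZ (k : ℕ) : ℤ := 4 * k + 5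

lemma MZ_ge_two (k : ℕ) : 2 ≤ MZ k := by
  have : (0:ℤ) ≤ (k:ℤ) := Int.natCast_nonneg k
  unfold MZ; linarith

/-- exponents: slot `l`, index `i`. -/
def Ex (k : ℕ) (l : Fin k) (i : ℕ) : ℕ := i * k + (l : ℕ) + 1

lemma Ex_pos (k : ℕ) (l : Fin k) (i : ℕ) : 1 ≤ Ex k l i := by unfold Ex; omega

lemma Ex_inj {k : ℕ} {l l' : Fin k} {i i' : ℕ} (h : Ex k l i = Ex k l' i') :
    l = l' ∧ i = i' := by
  unfold Ex at h
  have hl : (l : ℕ) < k := l.2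
  have hl' : (l' : ℕ) < k := l'.2
  have hii : i = i' := by
    rcases lt_trichotomy i i' with hlt | he | hgt
    · exfalso
      have : (i + 1) * k ≤ i' * k := Nat.mul_le_mul_right k hlt
      have : i * k + k ≤ i' * k := by nlinarith
      omega
    · exact he
    · exfalso
      have : (i' + 1) * k ≤ i * k := Nat.mul_le_mul_right k hgt
      have : i' * k + k ≤ i * k := by nlinarith
      omega
  subst hii
  refine ⟨Fin.ext ?_, rfl⟩
  omega

/-- digit-zero lemma: a vanishing combination with small coefficients has all
coefficients zero. -/
lemma digits_zero (M : ℤ) (hM : 2 ≤ M) :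
    ∀ (L : ℕ) (c : ℕ → ℤ), (∀ n, |c n| < M) →
      (∑ n ∈ Finset.range L, c n * M ^ n = 0) → ∀ n < L, c n = 0 := by
  intro L
  induction L with
  | zero => intro c _ _ n hn; exact absurd hn (Nat.not_lt_zero n)
  | succ L ih =>
    intro c hc h n hn
    have hsplit : ∑ n ∈ Finset.range (L+1), c n * M ^ n
        = (∑ m ∈ Finset.range L, c (m+1) * M ^ m) * M + c 0 := by
      rw [Finset.sum_range_succ']
      simp only [pow_zero, mul_one, pow_succ]
      rw [Finset.sum_mul]
      congr 1
      apply Finset.sum_congr rfl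
      intro m _
      ring
    rw [hsplit] at h
    set D : ℤ := ∑ m ∈ Finset.range L, c (m+1) * M ^ m with hD
    have hc0 : c 0 = -D * M := by linarith
    have hD0 : D = 0 := by
      by_contra hne
      have h1 : (1:ℤ) ≤ |D| := Int.one_le_abs hne
      have : |c 0| = |D| * M := by
        rw [hc0, abs_mul, abs_neg, abs_of_nonneg (by linarith : (0:ℤ) ≤ M)]
      have : M ≤ |c 0| := by
        rw [this]
        nlinarith
      exact absurd (hc 0) (by linarith)
    have hc00 : c 0 = 0 := by rw [hc0, hD0]; ring
    have hrest : ∀ m < L, c (m+1) = 0 := by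
      apply ih (fun m => c (m+1)) (fun m => hc (m+1))
      rw [hD0] at hD
      exact hD.symm
    cases n with
    | zero => exact hc00
    | succ m => exact hrest m (by omega)


/-- core: a vanishing `c0 + Σ ±M^{p i}` forces all fiber sums to vanish. -/
lemma core (M : ℤ) (hM : 2 ≤ M) {I : Type} [Fintype I] (w : I → ℤ) (p : I → ℕ) (c0 : ℤ)
    (hw : ∀ i, |w i| ≤ 1) (hp : ∀ i, 1 ≤ p i) (hc0 : |c0| < M)
    (hcard : (Fintype.card I : ℤ) < M)
    (heq : c0 + ∑ i, w i * M ^ (p i) = 0) :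
    c0 = 0 ∧ ∀ n, (∑ i ∈ Finset.univ.filter (fun i => p i = n), w i) = 0 := by
  classical
  set L : ℕ := (Finset.univ.sup p) + 1 with hL
  set c : ℕ → ℤ := fun n => (if n = 0 then c0 else 0)
      + ∑ i ∈ Finset.univ.filter (fun i => p i = n), w i with hcdef
  have hfsum : ∀ n, |∑ i ∈ Finset.univ.filter (fun i => p i = n), w i|
      ≤ (Fintype.card I : ℤ) := by
    intro n
    calc |∑ i ∈ Finset.univ.filter (fun i => p i = n), w i|
        ≤ ∑ i ∈ Finset.univ.filter (fun i => p i = n), |w i| :=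
          Finset.abs_sum_le_sum_abs _ _
      _ ≤ ∑ _i ∈ Finset.univ.filter (fun i => p i = n), 1 :=
          Finset.sum_le_sum (fun i _ => hw i)
      _ = ((Finset.univ.filter (fun i => p i = n)).card : ℤ) := by simp
      _ ≤ (Fintype.card I : ℤ) := by
          have := Finset.card_filter_le (Finset.univ : Finset I) (fun i => p i = n)
          exact_mod_cast by simpa [Finset.card_univ] using this
  have hzero_fiber : ∀ n, n = 0 → (∑ i ∈ Finset.univ.filter (fun i => p i = n), w i) = 0 := by
    intro n hn; subst hn
    have : Finset.univ.filter (fun i => p i = 0) = ∅ := by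
      apply Finset.filter_false_of_mem
      intro i _
      have := hp i; omega
    simp [this]
  have hcbound : ∀ n, |c n| < M := by
    intro n
    by_cases hn : n = 0
    · subst hn
      simp only [hcdef, if_pos rfl]
      rw [hzero_fiber 0 rfl]
      simpa using hc0
    · simp only [hcdef, if_neg hn, zero_add]
      exact lt_of_le_of_lt (hfsum n) hcard
  have hsum0 : ∑ n ∈ Finset.range L, c n * M ^ n = 0 := by
    have hre : ∑ n ∈ Finset.range L, c n * M ^ n
        = (∑ n ∈ Finset.range L, (if n = 0 then c0 else 0) * M ^ n)
          + ∑ n ∈ Finset.range L, (∑ i ∈ Finset.univ.filter (fun i => p i = n), w i) * M ^ n := by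
      rw [← Finset.sum_add_distrib]
      apply Finset.sum_congr rfl; intro n _
      simp only [hcdef]
      ring
    have h1 : (∑ n ∈ Finset.range L, (if n = 0 then c0 else 0) * M ^ n) = c0 := by
      rw [Finset.sum_eq_single 0]
      · simp
      · intro n _ hn; simp [hn]
      · intro h0; exfalso; apply h0; simp [hL]
    have hmaps : ∀ i ∈ (Finset.univ : Finset I), p i ∈ Finset.range L := by
      intro i _
      simp only [Finset.mem_range, hL]
      have : p i ≤ Finset.univ.sup p := Finset.le_sup (Finset.mem_univ i)
      omega
    have h2 : ∑ n ∈ Finset.range L, (∑ i ∈ Finset.univ.filter (fun i => p i = n), w i) * M ^ n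
        = ∑ i, w i * M ^ (p i) := by
      calc ∑ n ∈ Finset.range L, (∑ i ∈ Finset.univ.filter (fun i => p i = n), w i) * M ^ n
          = ∑ n ∈ Finset.range L, ∑ i ∈ Finset.univ.filter (fun i => p i = n), w i * M ^ (p i) := by
            apply Finset.sum_congr rfl
            intro n _
            rw [Finset.sum_mul]
            apply Finset.sum_congr rfl
            intro i hi
            rw [(Finset.mem_filter.mp hi).2]
        _ = ∑ i, w i * M ^ (p i) := Finset.sum_fiberwise_of_maps_to hmaps _
    rw [hre, h1, h2]; exact heq
  have hall := digits_zero M hM L c hcbound hsum0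
  have hc0z : c0 = 0 := by
    have := hall 0 (by simp [hL])
    simpa [hcdef, hzero_fiber 0 rfl] using this
  refine ⟨hc0z, fun n => ?_⟩
  by_cases hnL : n < L
  · have := hall n hnL
    by_cases hn : n = 0
    · subst hn; exact hzero_fiber 0 rfl
    · simpa [hcdef, hn] using this
  · have : Finset.univ.filter (fun i => p i = n) = ∅ := by
      apply Finset.filter_false_of_mem
      intro i _
      have h1 : p i ≤ Finset.univ.sup p := Finset.le_sup (Finset.mem_univ i)
      omega
    simp [this]


/-- the elements of our set: slot `l` contributes `cst (σ l) + sgn (σ l) * M^(Ex k l (j l))`. -/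
def xel (k : ℕ) (j : Fin k → ℕ) (σ : Fin k → Bool) : ℤ :=
  ∑ l, (cst (σ l) + sgn (σ l) * (MZ k) ^ (Ex k l (j l)))

/-- the classes -/
def Tset (k : ℕ) (σ : Fin k → Bool) : Set ℤ := {z | ∃ j, z = xel k j σ}

lemma xel_split (k : ℕ) (j : Fin k → ℕ) (σ : Fin k → Bool) :
    xel k j σ = (∑ l, cst (σ l)) + ∑ l, sgn (σ l) * (MZ k) ^ (Ex k l (j l)) := by
  unfold xel; rw [Finset.sum_add_distrib]

lemma cst_sum_bounds (k : ℕ) (σ : Fin k → Bool) :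
    0 ≤ (∑ l, cst (σ l)) ∧ (∑ l, cst (σ l)) ≤ (k : ℤ) := by
  constructor
  · apply Finset.sum_nonneg; intro l _; cases σ l <;> simp [cst]
  · calc (∑ l, cst (σ l)) ≤ ∑ _l : Fin k, (1:ℤ) := by
          apply Finset.sum_le_sum; intro l _; cases σ l <;> simp [cst]
      _ = (k : ℤ) := by simp

lemma sgn_false : sgn false = 1 := rfl
lemma sgn_true : sgn true = -1 := rfl

lemma Ex_eq_iff {k : ℕ} (l : Fin k) {x y : ℕ} : Ex k l x = Ex k l y ↔ x = y := by
  constructor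
  · intro h; exact (Ex_inj h).2
  · intro h; rw [h]

/-- The master structure lemma: an equation between pair sums of elements forces a
slotwise matching of signed indicator functions. -/
lemma quad {k : ℕ} (j j' a b : Fin k → ℕ) (σ σ' τ τ' : Fin k → Bool)
    (h : xel k j σ + xel k j' σ' = xel k a τ + xel k b τ') (l : Fin k) (i : ℕ) :
    (if j l = i then sgn (σ l) else 0) + (if j' l = i then sgn (σ' l) else 0)
      = (if a l = i then sgn (τ l) else 0) + (if b l = i then sgn (τ' l) else 0) := by
  classical
  set M := MZ k with hMdef
  have hM : 2 ≤ M := MZ_ge_two k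
  set jsel : Bool → Bool → (Fin k → ℕ) :=
    fun s t => if s then (if t then b else a) else (if t then j' else j) with hjsel
  set ssel : Bool → Bool → (Fin k → Bool) :=
    fun s t => if s then (if t then τ' else τ) else (if t then σ' else σ) with hssel
  set w : Fin k × Bool × Bool → ℤ :=
    fun q => sgn q.2.1 * sgn (ssel q.2.1 q.2.2 q.1) with hw
  set p : Fin k × Bool × Bool → ℕ :=
    fun q => Ex k q.1 (jsel q.2.1 q.2.2 q.1) with hp
  set c0 : ℤ := ((∑ l', cst (σ l')) + (∑ l', cst (σ' l')))
      - ((∑ l', cst (τ l')) + (∑ l', cst (τ' l'))) with hc0def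
  have hknn : (0:ℤ) ≤ (k:ℤ) := Int.natCast_nonneg k
  have hwb : ∀ q, |w q| ≤ 1 := by
    intro q
    rw [hw]
    simp only [abs_mul, abs_sgn, one_mul]
    exact le_refl 1
  have hpb : ∀ q, 1 ≤ p q := fun q => Ex_pos k _ _
  have hc0b : |c0| < M := by
    have b1 := cst_sum_bounds k σ
    have b2 := cst_sum_bounds k σ'
    have b3 := cst_sum_bounds k τ
    have b4 := cst_sum_bounds k τ'
    rw [hc0def, hMdef]
    unfold MZ
    rw [abs_lt]
    constructor <;> linarith
  have hcard : (Fintype.card (Fin k × Bool × Bool) : ℤ) < M := by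
    simp only [Fintype.card_prod, Fintype.card_bool, Fintype.card_fin]
    rw [hMdef]
    unfold MZ
    push_cast
    linarith
  have hsplit : ∑ l', (sgn (σ l') * M ^ (Ex k l' (j l'))
        + sgn (σ' l') * M ^ (Ex k l' (j' l'))
        - sgn (τ l') * M ^ (Ex k l' (a l'))
        - sgn (τ' l') * M ^ (Ex k l' (b l')))
      = (∑ l', sgn (σ l') * M ^ (Ex k l' (j l')))
        + (∑ l', sgn (σ' l') * M ^ (Ex k l' (j' l')))
        - (∑ l', sgn (τ l') * M ^ (Ex k l' (a l')))
        - (∑ l', sgn (τ' l') * M ^ (Ex k l' (b l'))) := by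
    rw [Finset.sum_sub_distrib, Finset.sum_sub_distrib, Finset.sum_add_distrib]
  have hexp : ∑ q, w q * M ^ (p q)
      = ∑ l', (sgn (σ l') * M ^ (Ex k l' (j l'))
        + sgn (σ' l') * M ^ (Ex k l' (j' l'))
        - sgn (τ l') * M ^ (Ex k l' (a l'))
        - sgn (τ' l') * M ^ (Ex k l' (b l'))) := by
    rw [Fintype.sum_prod_type]
    simp only [Fintype.sum_prod_type, Fintype.sum_bool, hw, hp, hjsel, hssel,
      Bool.false_eq_true, if_true, if_false, sgn_true, sgn_false]
    apply Finset.sum_congr rfl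
    intro l' _
    ring
  have heq : c0 + ∑ q, w q * M ^ (p q) = 0 := by
    rw [hexp, hsplit, hc0def]
    have h1 := xel_split k j σ
    have h2 := xel_split k j' σ'
    have h3 := xel_split k a τ
    have h4 := xel_split k b τ'
    rw [h1, h2, h3, h4] at h
    rw [← hMdef] at h
    linarith
  have hfib := (core M hM w p c0 hwb hpb hc0b hcard heq).2 (Ex k l i)
  rw [Finset.sum_filter] at hfib
  rw [Fintype.sum_prod_type] at hfib
  simp only [Fintype.sum_prod_type, Fintype.sum_bool] at hfib
  rw [Finset.sum_eq_single l] at hfib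
  · simp only [hw, hp, hjsel, hssel, Bool.false_eq_true, if_true, if_false,
      sgn_true, sgn_false] at hfib
    simp only [Ex_eq_iff l] at hfib
    split_ifs at hfib ⊢ <;> linarith
  · intro l' _ hne
    simp only [hw, hp, hjsel, hssel, Bool.false_eq_true, if_true, if_false]
    have hcond : ∀ (x : ℕ), ¬ (Ex k l' x = Ex k l i) := by
      intro x hEx
      exact hne (Ex_inj hEx).1
    simp only [hcond, if_false]
    ring
  · intro hl; exact absurd (Finset.mem_univ l) hl

/-- elements are uniquely encoded -/
lemma xel_inj {k : ℕ} {j a : Fin k → ℕ} {σ τ : Fin k → Bool}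
    (h : xel k j σ = xel k a τ) : j = a ∧ σ = τ := by
  have hdouble : xel k j σ + xel k j σ = xel k a τ + xel k a τ := by rw [h]
  have hpt : ∀ l, j l = a l ∧ σ l = τ l := by
    intro l
    have q := quad j j a a σ σ τ τ hdouble l (j l)
    rw [if_pos rfl] at q
    by_cases haj : a l = j l
    · rw [if_pos haj] at q
      have hs : sgn (σ l) = sgn (τ l) := by linarith
      exact ⟨haj.symm, sgn_inj hs⟩
    · rw [if_neg haj] at q
      exfalso
      have := sgn_ne_zero (σ l)
      have : sgn (σ l) + sgn (σ l) = 0 := by linarith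
      cases hb : σ l <;> rw [hb] at this <;> simp [sgn] at this
  exact ⟨funext fun l => (hpt l).1, funext fun l => (hpt l).2⟩

/-- structure of equal pair-sums within a class: slotwise matching -/
lemma pair_struct {k : ℕ} (j j' a b : Fin k → ℕ) (σ : Fin k → Bool)
    (h : xel k j σ + xel k j' σ = xel k a σ + xel k b σ) (l : Fin k) :
    (j l = a l ∧ j' l = b l) ∨ (j l = b l ∧ j' l = a l) := by
  have key : ∀ i, ((if j l = i then (1:ℤ) else 0) + (if j' l = i then 1 else 0)
      = (if a l = i then 1 else 0) + (if b l = i then 1 else 0)) := by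
    intro i
    have q := quad j j' a b σ σ σ σ h l i
    cases hb : σ l <;> rw [hb] at q <;> simp only [sgn_false, sgn_true] at q
    · exact q
    · split_ifs at q ⊢ <;> linarith
  have mem1 : a l = j l ∨ b l = j l := by
    by_contra hc
    push_neg at hc
    have q := key (j l)
    rw [if_pos rfl, if_neg hc.1, if_neg hc.2] at q
    split_ifs at q <;> omega
  have mem2 : a l = j' l ∨ b l = j' l := by
    by_contra hc
    push_neg at hc
    have q := key (j' l)
    rw [if_neg hc.1, if_neg hc.2] at q
    rw [if_pos rfl] at q
    split_ifs at q <;> omega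
  have mem3 : j l = a l ∨ j' l = a l := by
    by_contra hc
    push_neg at hc
    have q := key (a l)
    rw [if_neg hc.1, if_neg hc.2, if_pos rfl] at q
    split_ifs at q <;> omega
  have mem4 : j l = b l ∨ j' l = b l := by
    by_contra hc
    push_neg at hc
    have q := key (b l)
    rw [if_neg hc.1, if_neg hc.2] at q
    rw [if_pos rfl] at q
    split_ifs at q <;> omega
  rcases mem1 with m1 | m1 <;> rcases mem2 with m2 | m2 <;>
    rcases mem3 with m3 | m3 <;> rcases mem4 with m4 | m4 <;> omega

lemma card_filter_true (k : ℕ) (hk : 0 < k) (l₀ : Fin k) :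
    (Finset.univ.filter (fun d : Fin k → Bool => d l₀ = true)).card = 2^(k-1) := by
  classical
  have hbij : (Finset.univ.filter (fun d : Fin k → Bool => d l₀ = true)).card
      = (Finset.univ.filter (fun d : Fin k → Bool => ¬ (d l₀ = true))).card := by
    refine Finset.card_nbij' (fun d => Function.update d l₀ false)
      (fun d => Function.update d l₀ true) ?_ ?_ ?_ ?_
    · intro d hd
      simp only [Finset.mem_filter, Finset.mem_univ, true_and] at hd ⊢
      simp [Function.update_self]
    · intro d hd
      simp only [Finset.mem_filter, Finset.mem_univ, true_and] at hd ⊢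
      simp [Function.update_self]
    · intro d hd
      simp only [Finset.mem_coe, Finset.mem_filter, Finset.mem_univ, true_and] at hd
      funext x
      by_cases hx : x = l₀
      · subst hx; simp [Function.update_self, hd]
      · simp [Function.update_of_ne hx]
    · intro d hd
      simp only [Finset.mem_coe, Finset.mem_filter, Finset.mem_univ, true_and,
        Bool.not_eq_true] at hd
      funext x
      by_cases hx : x = l₀
      · subst hx; simp [Function.update_self, hd]
      · simp [Function.update_of_ne hx]
  have hadd := Finset.card_filter_add_card_filter_not
    (s := (Finset.univ : Finset (Fin k → Bool))) (p := fun d => d l₀ = true)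
  have huniv : (Finset.univ : Finset (Fin k → Bool)).card = 2^k := by
    rw [Finset.card_univ]
    simp [Fintype.card_fun]
  have hpow : 2^k = 2 * 2^(k-1) := by
    conv_lhs => rw [show k = (k-1)+1 from (Nat.succ_pred_eq_of_pos hk).symm]
    rw [pow_succ]
    ring
  rw [huniv, hpow] at hadd
  have hb2 : (Finset.univ.filter (fun d : Fin k → Bool => ¬ (d l₀ = true))).card = 2^(k-1) := by
    linarith
  linarith

lemma encard_D (k : ℕ) (hk : 0 < k) (l₀ : Fin k) :
    ({d : Fin k → Bool | d l₀ = true} : Set (Fin k → Bool)).encard = 2^(k-1) := by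
  classical
  have hset : ({d : Fin k → Bool | d l₀ = true} : Set (Fin k → Bool))
      = ↑(Finset.univ.filter (fun d : Fin k → Bool => d l₀ = true)) := by
    ext d; simp
  rw [hset, Set.encard_coe_eq_coe_finsetCard, card_filter_true k hk l₀]
  norm_cast

/-- Positive direction: each class is a `B₂[2^(k-1)]` set. -/
lemma Tset_isB2 (k : ℕ) (hk : 0 < k) (σ : Fin k → Bool) : IsB2 (2^(k-1)) (Tset k σ) := by
  intro ξ
  rcases Set.eq_empty_or_nonempty
    {p : Sym2 ℤ | ∃ a ∈ Tset k σ, ∃ b ∈ Tset k σ, p = s(a, b) ∧ a + b = ξ} with hE | ⟨p₀, hp₀⟩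
  · rw [hE]; simp
  · obtain ⟨a', ha', b', hb', hpeq, hsum⟩ := hp₀
    obtain ⟨A, rfl⟩ := ha'
    obtain ⟨B, rfl⟩ := hb'
    by_cases hAB : A = B
    · subst hAB
      have hsub : {p : Sym2 ℤ | ∃ a ∈ Tset k σ, ∃ b ∈ Tset k σ, p = s(a, b) ∧ a + b = ξ}
          ⊆ {s(xel k A σ, xel k A σ)} := by
        rintro p ⟨x, ⟨j, rfl⟩, y, ⟨j', rfl⟩, rfl, hsum'⟩
        have hstruct := pair_struct j j' A A σ (hsum'.trans hsum.symm)
        have hj : j = A := funext fun l => by rcases hstruct l with ⟨h1, _⟩ | ⟨h1, _⟩ <;> exact h1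
        have hj' : j' = A := funext fun l => by rcases hstruct l with ⟨_, h2⟩ | ⟨_, h2⟩ <;> exact h2
        rw [hj, hj']
        rfl
      calc Set.encard _ ≤ Set.encard {s(xel k A σ, xel k A σ)} := Set.encard_mono hsub
        _ = 1 := Set.encard_singleton _
        _ ≤ ((2^(k-1) : ℕ) : ℕ∞) := by
            have h1 : (1:ℕ) ≤ 2^(k-1) := Nat.one_le_two_pow
            exact_mod_cast h1
    · obtain ⟨l₀, hl₀⟩ := Function.ne_iff.mp hAB
      set G : (Fin k → Bool) → Sym2 ℤ := fun d =>
        s(xel k (fun l => if d l then A l else B l) σ,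
          xel k (fun l => if d l then B l else A l) σ) with hG
      have haux : ∀ (j j' : Fin k → ℕ), xel k j σ + xel k j' σ = ξ → j l₀ = A l₀ →
          ∃ d, d l₀ = true ∧ G d = s(xel k j σ, xel k j' σ) := by
        intro j j' hsum' hor
        have hstruct := pair_struct j j' A B σ (hsum'.trans hsum.symm)
        refine ⟨fun l => decide (j l = A l), by simp [hor], ?_⟩
        have h1 : (fun l => if (fun l => decide (j l = A l)) l then A l else B l) = j := by
          funext l
          by_cases hj : j l = A l
          · simp [hj]
          · simp only [hj, decide_false, if_false]
            rcases hstruct l with ⟨h1', _⟩ | ⟨h1', _⟩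
            · exact absurd h1' hj
            · exact h1'.symm
        have h2 : (fun l => if (fun l => decide (j l = A l)) l then B l else A l) = j' := by
          funext l
          by_cases hj : j l = A l
          · simp only [hj, decide_true, if_true]
            rcases hstruct l with ⟨_, h2'⟩ | ⟨h1', h2'⟩
            · exact h2'.symm
            · omega
          · simp only [hj, decide_false, if_false]
            rcases hstruct l with ⟨h1', _⟩ | ⟨_, h2'⟩
            · exact absurd h1' hj
            · exact h2'.symm
        rw [hG]
        simp only []
        rw [h1, h2]
      have hsub : {p : Sym2 ℤ | ∃ a ∈ Tset k σ, ∃ b ∈ Tset k σ, p = s(a, b) ∧ a + b = ξ}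
          ⊆ G '' {d | d l₀ = true} := by
        rintro p ⟨x, ⟨j, rfl⟩, y, ⟨j', rfl⟩, rfl, hsum'⟩
        have hstruct := pair_struct j j' A B σ (hsum'.trans hsum.symm)
        rcases hstruct l₀ with ⟨h1, _⟩ | ⟨_, h2⟩
        · obtain ⟨d, hd, hGd⟩ := haux j j' hsum' h1
          exact ⟨d, hd, hGd.symm ▸ rfl⟩
        · obtain ⟨d, hd, hGd⟩ := haux j' j (by rw [add_comm]; exact hsum') h2
          refine ⟨d, hd, ?_⟩
          rw [hGd]
          exact Sym2.eq_swap
      calc Set.encard _ ≤ Set.encard (G '' {d | d l₀ = true}) := Set.encard_mono hsub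
        _ ≤ Set.encard {d : Fin k → Bool | d l₀ = true} := Set.encard_image_le _ _
        _ = ((2^(k-1) : ℕ) : ℕ∞) := by
            rw [encard_D k hk l₀]
            norm_cast

lemma vsum_disagree (k : ℕ) (l : Fin k) (i : ℕ) (b : Bool) :
    (cst b + sgn b * (MZ k)^(Ex k l i)) + (cst (!b) + sgn (!b) * (MZ k)^(Ex k l i)) = 1 := by
  cases b <;> simp [cst, sgn] <;> ring

/-- Negative direction: no covering by `2^k - 1` sets all of which are `B₂[g']`. -/
lemma not_cover (k : ℕ) (hk : 0 < k) (g' : ℕ) (hg' : 0 < g')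
    (T : Fin (2^k - 1) → Set ℤ) (hT : ∀ i, IsB2 g' (T i))
    (hU : (⋃ σ, Tset k σ) = ⋃ i, T i) : False := by
  classical
  have h2k : 0 < 2^k := Nat.two_pow_pos k
  -- choice of colors
  have hmem : ∀ (j : Fin k → ℕ) (σ : Fin k → Bool), ∃ i, xel k j σ ∈ T i := by
    intro j σ
    have hx : xel k j σ ∈ ⋃ σ', Tset k σ' := Set.mem_iUnion.mpr ⟨σ, ⟨j, rfl⟩⟩
    rw [hU] at hx
    exact Set.mem_iUnion.mp hx
  choose χ hχ using hmem
  -- column pigeonhole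
  have hcardlt : Fintype.card (Fin (2^k-1)) < Fintype.card (Fin k → Bool) := by
    simp only [Fintype.card_fin, Fintype.card_fun, Fintype.card_bool]
    omega
  have hcol : ∀ j : Fin k → ℕ, ∃ st : (Fin k → Bool) × (Fin k → Bool),
      st.1 ≠ st.2 ∧ χ j st.1 = χ j st.2 := by
    intro j
    obtain ⟨σ, σ', hne, he⟩ := Fintype.exists_ne_map_eq_of_card_lt (χ j) hcardlt
    exact ⟨(σ, σ'), hne, he⟩
  choose ST hST1 hST2 using hcol
  have hdis : ∀ j, ∃ l, (ST j).1 l ≠ (ST j).2 l := fun j => Function.ne_iff.mp (hST1 j)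
  choose L0 hL0 using hdis
  -- cube and key map
  set N := 8^k * k * g' + 1 with hN
  have hNpos : 0 < N := by omega
  set CUBE : Finset (Fin k → ℕ) := Fintype.piFinset (fun _ => Finset.range N) with hCUBE
  set F : (Fin k → ℕ) → ((Fin k → Bool) × (Fin k → Bool) × Fin (2^k-1) × Fin k × (Fin k → ℕ)) :=
    fun j => ((ST j).1, (ST j).2, χ j (ST j).1, L0 j, Function.update j (L0 j) 0) with hF
  set tgt : Finset ((Fin k → Bool) × (Fin k → Bool) × Fin (2^k-1) × Fin k × (Fin k → ℕ)) :=
    Finset.univ ×ˢ Finset.univ ×ˢ Finset.univ ×ˢ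
      (Finset.univ.biUnion (fun l₀ : Fin k => {l₀} ×ˢ
        Fintype.piFinset (fun l => if l = l₀ then ({0} : Finset ℕ) else Finset.range N)))
      with htgt
  have hmaps : ∀ j ∈ CUBE, F j ∈ tgt := by
    intro j hj
    rw [htgt, hF]
    simp only [Finset.mem_product, Finset.mem_univ, true_and]
    refine Finset.mem_biUnion.mpr ⟨L0 j, Finset.mem_univ _, ?_⟩
    rw [Finset.mem_product]
    refine ⟨Finset.mem_singleton_self _, ?_⟩
    rw [Fintype.mem_piFinset]
    intro l
    dsimp only
    by_cases hl : l = L0 j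
    · subst hl; simp [Function.update_self]
    · rw [if_neg hl, Function.update_of_ne hl]
      exact (Fintype.mem_piFinset.mp (by rwa [hCUBE] at hj)) l
  have hcube_card : CUBE.card = N^k := by
    rw [hCUBE, Fintype.card_piFinset]
    simp [Finset.card_range]
  have hpicard : ∀ l₀ : Fin k,
      (Fintype.piFinset (fun l => if l = l₀ then ({0}:Finset ℕ) else Finset.range N)).card
        = N^(k-1) := by
    intro l₀
    rw [Fintype.card_piFinset]
    rw [← Finset.mul_prod_erase Finset.univ _ (Finset.mem_univ l₀)]
    rw [if_pos rfl]
    rw [Finset.card_singleton, one_mul]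
    have hcongr : ∀ l ∈ Finset.univ.erase l₀,
        (if l = l₀ then ({0}:Finset ℕ) else Finset.range N).card = N := by
      intro l hl
      rw [if_neg (Finset.ne_of_mem_erase hl), Finset.card_range]
    rw [Finset.prod_congr rfl hcongr, Finset.prod_const]
    congr 1
    rw [Finset.card_erase_of_mem (Finset.mem_univ _), Finset.card_univ, Fintype.card_fin]
  have htgt_card : tgt.card ≤ 2^k * (2^k * ((2^k - 1) * (k * N^(k-1)))) := by
    rw [htgt]
    rw [Finset.card_product, Finset.card_product, Finset.card_product]
    simp only [Finset.card_univ, Fintype.card_fun, Fintype.card_bool, Fintype.card_fin]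
    have hbu : (Finset.univ.biUnion (fun l₀ : Fin k => {l₀} ×ˢ
        Fintype.piFinset (fun l => if l = l₀ then ({0} : Finset ℕ) else Finset.range N))).card
          ≤ k * N^(k-1) := by
      calc (Finset.univ.biUnion _).card
          ≤ ∑ l₀ : Fin k, ({l₀} ×ˢ Fintype.piFinset
              (fun l => if l = l₀ then ({0} : Finset ℕ) else Finset.range N)).card :=
            Finset.card_biUnion_le
        _ = ∑ l₀ : Fin k, N^(k-1) := by
            apply Finset.sum_congr rfl
            intro l₀ _
            rw [Finset.card_product, Finset.card_singleton, one_mul, hpicard l₀]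
        _ = k * N^(k-1) := by
            rw [Finset.sum_const, Finset.card_univ, Fintype.card_fin, smul_eq_mul]
    exact Nat.mul_le_mul_left _ (Nat.mul_le_mul_left _ (Nat.mul_le_mul_left _ hbu))
  have h8 : (8:ℕ)^k = 2^k * 2^k * 2^k := by
    rw [show (8:ℕ) = 2*2*2 by norm_num, mul_pow, mul_pow]
  have hlt : tgt.card * g' < CUBE.card := by
    rw [hcube_card]
    have hstep1 : tgt.card * g' ≤ (2^k * (2^k * ((2^k-1) * (k * N^(k-1))))) * g' :=
      Nat.mul_le_mul_right _ htgt_card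
    have hstep2 : (2^k * (2^k * ((2^k-1) * (k * N^(k-1))))) * g'
        ≤ (8^k * k * g') * N^(k-1) := by
      rw [h8]
      have h1 : (2^k - 1) ≤ 2^k := Nat.sub_le _ _
      calc 2^k * (2^k * ((2^k-1) * (k * N^(k-1)))) * g'
          ≤ 2^k * (2^k * (2^k * (k * N^(k-1)))) * g' := by
            apply Nat.mul_le_mul_right
            apply Nat.mul_le_mul_left
            apply Nat.mul_le_mul_left
            exact Nat.mul_le_mul_right _ h1
        _ = (2^k * 2^k * 2^k * k * g') * N^(k-1) := by ring
    have hstep3 : (8^k * k * g') * N^(k-1) < N * N^(k-1) := by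
      apply Nat.mul_lt_mul_of_lt_of_le
      · omega
      · exact le_refl _
      · exact Nat.pow_pos hNpos
    have hNk : N * N^(k-1) = N^k := by
      rw [← pow_succ']
      congr 1
      omega
    omega
  obtain ⟨q, hq, hfibcard⟩ :=
    Finset.exists_lt_card_fiber_of_mul_lt_card_of_maps_to hmaps hlt
  set FB := CUBE.filter (fun j => F j = q) with hFBdef
  have hFBcard : g' < FB.card := hfibcard
  have hFBne : FB.Nonempty := Finset.card_pos.mp (by omega)
  obtain ⟨j₀, hj₀⟩ := hFBne
  set σ := (ST j₀).1 with hσ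
  set σ' := (ST j₀).2 with hσ'
  set c := χ j₀ (ST j₀).1 with hc
  set l₀ := L0 j₀ with hl₀def
  have hkey : ∀ j ∈ FB, (ST j).1 = σ ∧ (ST j).2 = σ' ∧ χ j (ST j).1 = c
      ∧ Function.update j (L0 j) 0 = Function.update j₀ l₀ 0 ∧ L0 j = l₀ := by
    intro j hj
    have h1 : F j = q := (Finset.mem_filter.mp hj).2
    have h2 : F j₀ = q := (Finset.mem_filter.mp hj₀).2
    have h3 := h1.trans h2.symm
    rw [hF] at h3
    simp only [Prod.mk.injEq] at h3
    obtain ⟨e1, e2, e3, e4, e5⟩ := h3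
    exact ⟨e1, e2, e3, e5, e4⟩
  have hσne : σ ≠ σ' := hST1 j₀
  have hl₀ne : σ l₀ ≠ σ' l₀ := hL0 j₀
  set ξ := xel k j₀ σ + xel k j₀ σ' with hξ
  have hsum : ∀ j ∈ FB, xel k j σ + xel k j σ' = ξ := by
    intro j hj
    obtain ⟨e1, e2, e3, e5, e4⟩ := hkey j hj
    rw [hξ]
    unfold xel
    rw [← Finset.sum_add_distrib, ← Finset.sum_add_distrib]
    apply Finset.sum_congr rfl
    intro l _
    by_cases hl : l = l₀
    · have hne' : σ l ≠ σ' l := by rw [hl]; exact hl₀ne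
      have hb : σ' l = !(σ l) := by
        cases hx1 : σ l <;> cases hx2 : σ' l <;>
          first
            | rfl
            | (exact absurd (hx1.trans hx2.symm) hne')
      rw [hb, vsum_disagree k l (j l) (σ l), vsum_disagree k l (j₀ l) (σ l)]
    · have hjl : j l = j₀ l := by
        have hcf := congrFun e5 l
        rw [e4] at hcf
        rwa [Function.update_of_ne hl, Function.update_of_ne hl] at hcf
      rw [hjl]
  set Pr : (Fin k → ℕ) → Sym2 ℤ := fun j => s(xel k j σ, xel k j σ') with hPr
  have hinj : Set.InjOn Pr FB := by
    intro u _ v _ he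
    rw [hPr] at he
    simp only [Sym2.eq_iff] at he
    rcases he with ⟨h1, _⟩ | ⟨h1, _⟩
    · exact (xel_inj h1).1
    · exact absurd (xel_inj h1).2 hσne
  have hsubset : (↑(FB.image Pr) : Set (Sym2 ℤ))
      ⊆ {p : Sym2 ℤ | ∃ a ∈ T c, ∃ b ∈ T c, p = s(a,b) ∧ a + b = ξ} := by
    intro p hp
    simp only [Finset.coe_image, Set.mem_image, Finset.mem_coe] at hp
    obtain ⟨j, hj, rfl⟩ := hp
    obtain ⟨e1, e2, e3, _, _⟩ := hkey j hj
    refine ⟨xel k j σ, ?_, xel k j σ', ?_, rfl, hsum j hj⟩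
    · have hm := hχ j σ
      have hcc : χ j σ = c := by rw [← e1]; exact e3
      rwa [hcc] at hm
    · have hm := hχ j σ'
      have hcc : χ j σ' = c := by
        rw [← e2, ← hST2 j]
        rw [e1] at e3
        rw [e1]
        exact e3
      rwa [hcc] at hm
  have hcount : ((FB.image Pr).card : ℕ∞) ≤ (g' : ℕ∞) := by
    calc ((FB.image Pr).card : ℕ∞)
        = (↑(FB.image Pr) : Set (Sym2 ℤ)).encard :=
          (Set.encard_coe_eq_coe_finsetCard _).symm
      _ ≤ Set.encard {p : Sym2 ℤ | ∃ a ∈ T c, ∃ b ∈ T c, p = s(a,b) ∧ a + b = ξ} :=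
          Set.encard_mono hsubset
      _ ≤ (g' : ℕ∞) := hT c ξ
  have hcard_img : (FB.image Pr).card = FB.card := Finset.card_image_of_injOn hinj
  rw [hcard_img] at hcount
  have hfin : FB.card ≤ g' := by exact_mod_cast hcount
  omega

end B2Proof

theorem stmt_0 :
    ∀ k : ℕ, 0 < k → ∃ S : Set ℤ,
      (∃ T : Fin (2 ^ k) → Set ℤ, (∀ i, IsB2 (2 ^ (k - 1)) (T i)) ∧ S = ⋃ i, T i) ∧
      ∀ g' : ℕ, 0 < g' →
        ¬ ∃ T : Fin (2 ^ k - 1) → Set ℤ, (∀ i, IsB2 g' (T i)) ∧ S = ⋃ i, T i := by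
  intro k hk
  refine ⟨⋃ σ : Fin k → Bool, B2Proof.Tset k σ, ?_, ?_⟩
  · have hcard : Fintype.card (Fin k → Bool) = 2^k := by
      simp [Fintype.card_fun]
    let e : Fin (2^k) ≃ (Fin k → Bool) := (Fintype.equivFinOfCardEq hcard).symm
    refine ⟨fun i => B2Proof.Tset k (e i), fun i => B2Proof.Tset_isB2 k hk (e i), ?_⟩
    ext z
    simp only [Set.mem_iUnion]
    constructor
    · rintro ⟨σ, hz⟩
      refine ⟨e.symm σ, ?_⟩
      rw [Equiv.apply_symm_apply]
      exact hz
    · rintro ⟨i, hz⟩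
      exact ⟨e i, hz⟩
  · rintro g' hg' ⟨T, hT, hS⟩
    exact B2Proof.not_cover k hk g' hg' T hT hS
end

section
/- For any positive integer k and any positive integer j with 2^j ≥ k, setting d = 2^j − 1, there exist vectors v₁, …, v_k ∈ {1, −1}^d such that: (i) for all indices i ≠ j, the vector v_i + v_j has strictly more than d/2 coordinates equal to 0, and (ii) the pairwise sums are distinct, i.e. v_i + v_j = v_h + v_ℓ implies {i, j} = {h, ℓ}. -/
open Finset

namespace Stmt1Aux

def χ (a : ZMod 2) : ℤ := if a = 0 then 1 else -1

variable {j : ℕ}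

def ip (x s : Fin j → ZMod 2) : ZMod 2 := ∑ b, x b * s b

lemma ip_add_right (x s t : Fin j → ZMod 2) : ip x (s + t) = ip x s + ip x t := by
  simp [ip, mul_add, Finset.sum_add_distrib]

lemma ip_zero_right (x : Fin j → ZMod 2) : ip x 0 = 0 := by simp [ip]

lemma ip_single (x : Fin j → ZMod 2) (b : Fin j) : ip x (Pi.single b 1) = x b := by
  simp [ip, Pi.single_apply]

lemma single_ne_zero (b : Fin j) : (Pi.single b 1 : Fin j → ZMod 2) ≠ 0 := by
  intro h
  have := congrFun h b
  simp at this

lemma eq_of_ip_eq {x y : Fin j → ZMod 2} (h : ∀ s, s ≠ 0 → ip x s = ip y s) : x = y := by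
  funext b
  have := h (Pi.single b 1) (single_ne_zero b)
  rwa [ip_single, ip_single] at this

lemma ip_or {x y z : Fin j → ZMod 2} (h : ∀ s, ip x s = ip y s ∨ ip x s = ip z s) :
    (∀ s, ip x s = ip y s) ∨ (∀ s, ip x s = ip z s) := by
  by_contra hc
  push_neg at hc
  obtain ⟨⟨s1, h1⟩, ⟨s2, h2⟩⟩ := hc
  have e1 : ip x s1 = ip z s1 := (h s1).resolve_left h1
  have e2 : ip x s2 = ip y s2 := (h s2).resolve_right h2
  rcases h (s1 + s2) with h3 | h3 <;> rw [ip_add_right, ip_add_right] at h3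
  · rw [← e2] at h3
    exact h1 (add_right_cancel h3)
  · rw [← e1] at h3
    exact h2 (add_left_cancel h3)

lemma chi_pair : ∀ a a' b b' : ZMod 2,
    χ a + χ a' = χ b + χ b' → (a + a' = b + b' ∧ (a = b ∨ a = b')) := by decide

lemma chi_zero : ∀ a a' : ZMod 2, (χ a + χ a' = 0 ↔ a + a' = 1) := by decide

lemma zmod_ne_zero : ∀ a : ZMod 2, a ≠ 0 → a = 1 := by decide

lemma zmod_ne_one : ∀ a : ZMod 2, a ≠ 1 → a = 0 := by decide

lemma zmod_add_eq : ∀ a b : ZMod 2, a + b = 0 → a = b := by decide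

lemma zmod_add_add : ∀ a b : ZMod 2, a + b + b = a := by decide

lemma add_add_cancel (s e : Fin j → ZMod 2) : s + e + e = s := by
  funext c
  simp only [Pi.add_apply]
  exact zmod_add_add _ _

lemma card_ip_one (m : Fin j → ZMod 2) (hm : m ≠ 0) :
    2 * (univ.filter fun s : Fin j → ZMod 2 => ip m s = 1).card = 2 ^ j := by
  obtain ⟨b, hb⟩ : ∃ b, m b ≠ 0 := by
    by_contra h
    push_neg at h
    exact hm (funext fun b => h b)
  have hb1 : m b = 1 := zmod_ne_zero _ hb
  have key : ∀ s : Fin j → ZMod 2, ip m (s + Pi.single b 1) = ip m s + 1 := by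
    intro s
    rw [ip_add_right, ip_single, hb1]
  have hcard : (univ.filter fun s : Fin j → ZMod 2 => ip m s = 1).card =
      (univ.filter fun s : Fin j → ZMod 2 => ¬ ip m s = 1).card := by
    apply Finset.card_nbij' (fun s => s + Pi.single b 1) (fun s => s + Pi.single b 1)
    · intro s hs
      simp only [mem_coe, mem_filter, mem_univ, true_and] at hs ⊢
      rw [key, hs]
      decide
    · intro s hs
      simp only [mem_coe, mem_filter, mem_univ, true_and] at hs ⊢
      rw [key, zmod_ne_one _ hs]
      decide
    · intro s _
      exact add_add_cancel s _
    · intro s _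
      exact add_add_cancel s _
  have htot := Finset.card_filter_add_card_filter_not
    (s := (univ : Finset (Fin j → ZMod 2))) (fun s => ip m s = 1)
  rw [← hcard] at htot
  have huniv : (univ : Finset (Fin j → ZMod 2)).card = 2 ^ j := by
    simp [Finset.card_univ, Fintype.card_fun]
  omega

end Stmt1Aux

open Stmt1Aux in
theorem stmt_1 :
    ∀ k j : ℕ, 0 < k → 0 < j → k ≤ 2 ^ j →
      ∃ v : Fin k → Fin (2 ^ j - 1) → ℤ,
        (∀ i t, v i t = 1 ∨ v i t = -1) ∧
        (∀ i i', i ≠ i' →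
          2 * (Finset.univ.filter fun t => v i t + v i' t = 0).card > 2 ^ j - 1) ∧
        (∀ i i' h l, v i + v i' = v h + v l → ({i, i'} : Set (Fin k)) = {h, l}) := by
  intro k j hk hj hkj
  -- embedding of indices
  obtain ⟨emb⟩ : Nonempty (Fin k ↪ (Fin j → ZMod 2)) := by
    apply Function.Embedding.nonempty_of_card_le
    simpa [Fintype.card_fun] using hkj
  -- equivalence of coordinates with nonzero vectors
  have hpos : 0 < 2 ^ j := Nat.pow_pos (n := j) (by norm_num)
  obtain ⟨e⟩ : Nonempty (Fin (2 ^ j - 1) ≃ {s : Fin j → ZMod 2 // s ≠ 0}) := by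
    apply Fintype.card_eq.mp
    rw [Fintype.card_fin, Fintype.card_subtype_compl, Fintype.card_subtype_eq,
      Fintype.card_fun]
    simp
  refine ⟨fun i t => χ (ip (emb i) (e t).1), ?_, ?_, ?_⟩
  · intro i t
    unfold χ
    dsimp only
    split <;> simp
  · intro i i' hne
    have hm : emb i + emb i' ≠ 0 := by
      intro h0
      apply hne
      apply emb.injective
      funext b
      have := congrFun h0 b
      simp only [Pi.add_apply, Pi.zero_apply] at this
      exact zmod_add_eq _ _ this
    have hfe : (Finset.univ.filter fun t => χ (ip (emb i) (e t).1) + χ (ip (emb i') (e t).1) = 0)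
        = Finset.univ.filter fun t => ip (emb i + emb i') (e t).1 = 1 := by
      apply Finset.filter_congr
      intro t _
      rw [chi_zero]
      constructor
      · intro h
        rw [← h]
        simp [ip, Finset.sum_add_distrib, add_mul]
      · intro h
        rw [← h]
        simp [ip, Finset.sum_add_distrib, add_mul]
    rw [hfe]
    have hcc : (Finset.univ.filter fun t => ip (emb i + emb i') (e t).1 = 1).card
        = (Finset.univ.filter fun s : Fin j → ZMod 2 => ip (emb i + emb i') s = 1).card := by
      apply Finset.card_nbij (fun t => (e t).1)
      · intro t ht
        simp only [Finset.mem_coe, Finset.mem_filter, Finset.mem_univ, true_and] at ht ⊢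
        exact ht
      · intro t _ t' _ htt
        exact e.injective (Subtype.ext htt)
      · intro s hs
        simp only [Finset.coe_filter, Finset.mem_univ, true_and, Set.mem_setOf_eq,
          Set.mem_image] at hs ⊢
        have hs0 : s ≠ 0 := by
          intro h0
          rw [h0, ip_zero_right] at hs
          exact absurd hs (by decide)
        exact ⟨e.symm ⟨s, hs0⟩, by simpa using hs, by simp⟩
    rw [hcc, card_ip_one _ hm]
    omega
  · intro i i' h l hsum
    have hpt : ∀ s : Fin j → ZMod 2, s ≠ 0 →
        χ (ip (emb i) s) + χ (ip (emb i') s) = χ (ip (emb h) s) + χ (ip (emb l) s) := by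
      intro s hs
      have := congrFun hsum (e.symm ⟨s, hs⟩)
      simpa using this
    have hkey : ∀ s : Fin j → ZMod 2, s ≠ 0 →
        (ip (emb i) s + ip (emb i') s = ip (emb h) s + ip (emb l) s ∧
          (ip (emb i) s = ip (emb h) s ∨ ip (emb i) s = ip (emb l) s)) :=
      fun s hs => chi_pair _ _ _ _ (hpt s hs)
    have hor : (∀ s, ip (emb i) s = ip (emb h) s) ∨ (∀ s, ip (emb i) s = ip (emb l) s) := by
      apply ip_or
      intro s
      by_cases hs : s = 0
      · subst hs; left; rw [ip_zero_right, ip_zero_right]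
      · exact (hkey s hs).2
    rcases hor with hx | hx
    · have hih : i = h := emb.injective (eq_of_ip_eq fun s hs => hx s)
      have hil : i' = l := by
        apply emb.injective
        apply eq_of_ip_eq
        intro s hs
        have h1 := (hkey s hs).1
        rw [hx s] at h1
        exact add_left_cancel h1
      rw [hih, hil]
    · have hil : i = l := emb.injective (eq_of_ip_eq fun s hs => hx s)
      have hih : i' = h := by
        apply emb.injective
        apply eq_of_ip_eq
        intro s hs
        have h1 := (hkey s hs).1
        rw [hx s, add_comm (ip (emb h) s)] at h1
        exact add_left_cancel h1
      rw [hil, hih]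
      exact Set.pair_comm _ _
end

section
/- Let d be a positive integer, let m = ⌈d/2⌉, and let M be a d × m matrix with positive integer entries such that every m × m matrix formed by selecting m rows of M is invertible over ℚ. For u ∈ (ℤ_{>0})^d define φ(u) ∈ ℤ^d by φ(u)_j = 5^(u_j · d + j) for j = 1, …, d, and for vectors a, b ∈ ℤ^d let a · b denote the standard dot product. Suppose v, w ∈ {1, −1}^d and y, z, y', z' ∈ (ℤ_{>0})^m satisfy φ(M·y) · v + φ(M·z) · w = φ(M·y') · v + φ(M·z') · w. Then: (i) if v + w is equal to 0 in at least d/2 coordinates, then either (y = y' and z = z') or (y = z and y' = z'); and (ii) if v + w is nonzero in at least d/2 coordinates, then either (y = y' and z = z') or (y = z' and z = y'). -/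
open Matrix

/-- Base-5 digit lemma: a combination with small coefficients summing to zero is trivial. -/
lemma pow5_zero : ∀ (N : ℕ) (c : ℕ → ℤ), (∀ e, |c e| ≤ 4) →
    (∑ e ∈ Finset.range N, c e * 5 ^ e) = 0 → ∀ e < N, c e = 0 := by
  intro N
  induction N with
  | zero => intro c _ _ e he; omega
  | succ n ih =>
    intro c hc hsum e he
    rw [Finset.sum_range_succ'] at hsum
    have h5 : (∑ i ∈ Finset.range n, c (i + 1) * 5 ^ (i + 1)) =
        5 * ∑ i ∈ Finset.range n, c (i + 1) * 5 ^ i := by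
      rw [Finset.mul_sum]
      exact Finset.sum_congr rfl fun i _ => by ring
    rw [h5] at hsum
    simp only [pow_zero, mul_one] at hsum
    have hdvd : (5 : ℤ) ∣ c 0 := ⟨-∑ i ∈ Finset.range n, c (i + 1) * 5 ^ i, by linarith⟩
    have hc0 : c 0 = 0 := by have := hc 0; rw [abs_le] at this; omega
    have hrest : (∑ i ∈ Finset.range n, c (i + 1) * 5 ^ i) = 0 := by
      rw [hc0] at hsum; omega
    have := ih (fun i => c (i + 1)) (fun i => hc (i + 1)) hrest
    rcases Nat.eq_zero_or_pos e with h | h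
    · rw [h]; exact hc0
    · obtain ⟨k, rfl⟩ : ∃ k, e = k + 1 := ⟨e - 1, by omega⟩
      exact this k (by omega)

/-- Indicator/multiset lemma for four naturals. -/
lemma ind_multiset (p q r s : ℕ)
    (h : ∀ e : ℕ, ((if p = e then (1:ℤ) else 0) + (if q = e then 1 else 0))
        = (if r = e then 1 else 0) + (if s = e then 1 else 0)) :
    (p = r ∧ q = s) ∨ (p = s ∧ q = r) := by
  by_cases hpr : p = r
  · subst hpr
    have h2 := h q
    split_ifs at h2 <;> omega
  · have h1 := h p
    have h3 := h r
    split_ifs at h1 h3 <;> omega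

lemma resid_ne (d : ℤ) (hd : 0 < d) (P Q i i' : ℤ) (hiD : 0 ≤ i) (hi'D : 0 ≤ i')
    (hi : i < d) (hi' : i' < d) (hne : i ≠ i') : P * d + i + 1 ≠ Q * d + i' + 1 := by
  intro h
  have h2 : (P - Q) * d = i' - i := by linear_combination h
  rcases lt_trichotomy (P - Q) 0 with hk | hk | hk
  · have h3 : (P - Q) * d ≤ (-1) * d :=
      mul_le_mul_of_nonneg_right (by omega) hd.le
    linarith
  · rw [hk, zero_mul] at h2; omega
  · have h3 : (1 : ℤ) * d ≤ (P - Q) * d :=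
      mul_le_mul_of_nonneg_right (by omega) hd.le
    linarith


/-- Row separation: from the global power-of-5 identity, derive per-row multiset facts. -/
lemma row_sep (d : ℕ) (hd : 0 < d) (a b a' b' : Fin d → ℕ) (v w : Fin d → ℤ)
    (hv : ∀ t, v t = 1 ∨ v t = -1) (hw : ∀ t, w t = 1 ∨ w t = -1)
    (hfa : ∀ j, ∃ P : ℤ, 1 ≤ P ∧ (a j : ℤ) = P * d + j + 1)
    (hfb : ∀ j, ∃ P : ℤ, 1 ≤ P ∧ (b j : ℤ) = P * d + j + 1)
    (hfa' : ∀ j, ∃ P : ℤ, 1 ≤ P ∧ (a' j : ℤ) = P * d + j + 1)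
    (hfb' : ∀ j, ∃ P : ℤ, 1 ≤ P ∧ (b' j : ℤ) = P * d + j + 1)
    (heq : ∑ j : Fin d, ((5:ℤ) ^ a j * v j + 5 ^ b j * w j)
         = ∑ j : Fin d, ((5:ℤ) ^ a' j * v j + 5 ^ b' j * w j)) :
    ∀ j : Fin d,
      (v j = w j → (a j = a' j ∧ b j = b' j) ∨ (a j = b' j ∧ b j = a' j)) ∧
      (v j = -w j → (a j = a' j ∧ b j = b' j) ∨ (a j = b j ∧ a' j = b' j)) := by
  classical
  set N : ℕ := (∑ j : Fin d, (a j + b j + a' j + b' j)) + 1 with hN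
  have haN : ∀ j : Fin d, a j < N ∧ b j < N ∧ a' j < N ∧ b' j < N := by
    intro j
    have h1 : a j + b j + a' j + b' j ≤ ∑ j : Fin d, (a j + b j + a' j + b' j) :=
      Finset.single_le_sum (f := fun j => a j + b j + a' j + b' j)
        (fun i _ => Nat.zero_le _) (Finset.mem_univ j)
    omega
  set t : Fin d → ℕ → ℤ := fun j e =>
    (if a j = e then (1:ℤ) else 0) * v j + (if b j = e then 1 else 0) * w j
    - ((if a' j = e then 1 else 0) * v j + (if b' j = e then 1 else 0) * w j) with ht
  set c : ℕ → ℤ := fun e => ∑ j : Fin d, t j e with hc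
  have hform : ∀ (j : Fin d) (e : ℕ), t j e ≠ 0 →
      ∃ P : ℤ, 1 ≤ P ∧ (e : ℤ) = P * d + j + 1 := by
    intro j e hne
    by_cases h1 : a j = e
    · obtain ⟨P, hP, hPe⟩ := hfa j; exact ⟨P, hP, by rw [← h1]; exact hPe⟩
    by_cases h2 : b j = e
    · obtain ⟨P, hP, hPe⟩ := hfb j; exact ⟨P, hP, by rw [← h2]; exact hPe⟩
    by_cases h3 : a' j = e
    · obtain ⟨P, hP, hPe⟩ := hfa' j; exact ⟨P, hP, by rw [← h3]; exact hPe⟩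
    by_cases h4 : b' j = e
    · obtain ⟨P, hP, hPe⟩ := hfb' j; exact ⟨P, hP, by rw [← h4]; exact hPe⟩
    exfalso; apply hne
    simp only [ht, if_neg h1, if_neg h2, if_neg h3, if_neg h4]; ring
  have hcross : ∀ (j j' : Fin d), j ≠ j' → ∀ e : ℕ, t j e ≠ 0 → t j' e = 0 := by
    intro j j' hjj e htj
    by_contra htj'
    obtain ⟨P, hP, hPe⟩ := hform j e htj
    obtain ⟨Q, hQ, hQe⟩ := hform j' e htj'
    refine resid_ne d (by exact_mod_cast hd) P Q j j' (by positivity) (by positivity)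
      (by exact_mod_cast j.isLt) (by exact_mod_cast j'.isLt)
      (fun h => hjj (Fin.ext (by exact_mod_cast h))) ?_
    rw [← hPe, ← hQe]
  have habs : ∀ j e, |t j e| ≤ 4 := by
    intro j e
    rcases hv j with h1 | h1 <;> rcases hw j with h2 | h2 <;>
      simp only [ht, h1, h2] <;> split_ifs <;> norm_num
  have hsingle : ∀ e : ℕ, ∀ j : Fin d, t j e ≠ 0 → c e = t j e := by
    intro e j hj
    rw [hc]
    exact Finset.sum_eq_single j (fun j' _ hne => hcross j j' (Ne.symm hne) e hj)
      (fun h => absurd (Finset.mem_univ j) h)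
  have hcabs : ∀ e, |c e| ≤ 4 := by
    intro e
    by_cases hex : ∃ j, t j e ≠ 0
    · obtain ⟨j0, hj0⟩ := hex
      rw [hsingle e j0 hj0]; exact habs j0 e
    · push_neg at hex
      have h0 : c e = 0 := by rw [hc]; exact Finset.sum_eq_zero (fun j _ => hex j)
      rw [h0]; norm_num
  have hsum0 : (∑ e ∈ Finset.range N, c e * 5 ^ e) = 0 := by
    have hswap : (∑ e ∈ Finset.range N, c e * 5 ^ e)
        = ∑ j : Fin d, ∑ e ∈ Finset.range N, t j e * 5 ^ e := by
      rw [hc]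
      calc (∑ e ∈ Finset.range N, (∑ j : Fin d, t j e) * 5 ^ e)
          = ∑ e ∈ Finset.range N, ∑ j : Fin d, t j e * 5 ^ e :=
            Finset.sum_congr rfl (fun e _ => Finset.sum_mul ..)
        _ = _ := Finset.sum_comm
    have hs : ∀ p : ℕ, p < N →
        (∑ e ∈ Finset.range N, (if p = e then (1:ℤ) else 0) * 5 ^ e) = 5 ^ p := by
      intro p hp
      rw [Finset.sum_eq_single p]
      · simp
      · intro e _ hne; rw [if_neg (fun h => hne h.symm), zero_mul]
      · intro hp'; exact absurd (Finset.mem_range.mpr hp) hp'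
    have hj : ∀ j : Fin d, (∑ e ∈ Finset.range N, t j e * 5 ^ e)
        = ((5:ℤ) ^ a j * v j + 5 ^ b j * w j) - (5 ^ a' j * v j + 5 ^ b' j * w j) := by
      intro j
      have expand : ∀ e ∈ Finset.range N, t j e * 5 ^ e =
          ((if a j = e then (1:ℤ) else 0) * 5 ^ e) * v j
          + ((if b j = e then (1:ℤ) else 0) * 5 ^ e) * w j
          - (((if a' j = e then (1:ℤ) else 0) * 5 ^ e) * v j
          + ((if b' j = e then (1:ℤ) else 0) * 5 ^ e) * w j) := by
        intro e _; simp only [ht]; ring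
      rw [Finset.sum_congr rfl expand, Finset.sum_sub_distrib, Finset.sum_add_distrib,
        Finset.sum_add_distrib, ← Finset.sum_mul, ← Finset.sum_mul, ← Finset.sum_mul,
        ← Finset.sum_mul, hs _ (haN j).1, hs _ (haN j).2.1, hs _ (haN j).2.2.1,
        hs _ (haN j).2.2.2]
    rw [hswap, Finset.sum_congr rfl (fun j _ => hj j), Finset.sum_sub_distrib, sub_eq_zero]
    exact heq
  have hczero := pow5_zero N c hcabs hsum0
  have htzero : ∀ j e, t j e = 0 := by
    intro j e
    by_cases ht0 : t j e = 0
    · exact ht0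
    exfalso
    have hone : a j = e ∨ b j = e ∨ a' j = e ∨ b' j = e := by
      by_contra hno
      push_neg at hno
      apply ht0
      simp only [ht, if_neg hno.1, if_neg hno.2.1, if_neg hno.2.2.1, if_neg hno.2.2.2]; ring
    have he : e < N := by
      have h4 := haN j
      rcases hone with h | h | h | h <;> omega
    have := hsingle e j ht0
    rw [hczero e he] at this
    exact ht0 this.symm
  have key : ∀ (j : Fin d) (e : ℕ),
      (if a j = e then (1:ℤ) else 0) * v j + (if b j = e then 1 else 0) * w j
      = (if a' j = e then 1 else 0) * v j + (if b' j = e then 1 else 0) * w j := by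
    intro j e
    have h0 := htzero j e
    simp only [ht] at h0
    linarith
  clear htzero hsum0 hcabs habs hcross hform hsingle hczero haN heq
  clear_value t c N
  clear hN hc ht t c N
  intro j
  constructor
  · intro hvw
    rcases hv j with h1 | h1 <;> [skip; skip] <;>
      · have h2 : w j = v j := hvw.symm
        apply ind_multiset (a j) (b j) (a' j) (b' j)
        intro e
        have h3 := key j e
        rw [h2, h1] at h3
        split_ifs at h3 ⊢ <;> linarith
  · intro hvw
    have h2 : w j = -v j := by linarith [hvw]
    rcases hv j with h1 | h1 <;>
      · have h4 : (a j = a' j ∧ b' j = b j) ∨ (a j = b j ∧ b' j = a' j) := by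
          apply ind_multiset (a j) (b' j) (a' j) (b j)
          intro e
          have h3 := key j e
          rw [h2, h1] at h3
          split_ifs at h3 ⊢ <;> linarith
        tauto

/-- Kernel lemma: a vector killed on ≥ m rows is zero. -/
lemma kernel_lemma (d : ℕ) (M : Matrix (Fin d) (Fin ((d + 1) / 2)) ℤ)
    (hMinv : ∀ rows : Fin ((d + 1) / 2) → Fin d, Function.Injective rows →
      ((M.submatrix rows id).map ((↑) : ℤ → ℚ)).det ≠ 0)
    (x : Fin ((d + 1) / 2) → ℤ) (T : Finset (Fin d)) (hT : (d + 1) / 2 ≤ T.card)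
    (h0 : ∀ j ∈ T, M.mulVec x j = 0) : x = 0 := by
  obtain ⟨T', hsub, hcard⟩ := Finset.exists_subset_card_eq hT
  set rows : Fin ((d + 1) / 2) → Fin d := fun i => T'.orderEmbOfFin hcard i with hrows
  have hinj : Function.Injective rows := (T'.orderEmbOfFin hcard).injective
  have hdet := hMinv rows hinj
  set A : Matrix (Fin ((d+1)/2)) (Fin ((d+1)/2)) ℚ := (M.submatrix rows id).map ((↑) : ℤ → ℚ)
  have hunit : IsUnit A.det := (isUnit_iff_ne_zero).mpr hdet
  have hinj2 : Function.Injective A.mulVec := by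
    have := A.invertibleOfIsUnitDet hunit
    exact A.mulVec_injective_of_invertible
  have hzero : A.mulVec (fun i => (x i : ℚ)) = 0 := by
    funext i
    have hM : M.mulVec x (rows i) = 0 := h0 (rows i) (hsub (T'.orderEmbOfFin_mem hcard i))
    simp only [A, Matrix.mulVec, dotProduct, Matrix.map_apply, Matrix.submatrix_apply,
      id_eq, Pi.zero_apply]
    have : ((M.mulVec x (rows i) : ℤ) : ℚ) = 0 := by rw [hM]; norm_num
    rw [← this]
    simp only [Matrix.mulVec, dotProduct]
    push_cast
    rfl
  have : (fun i => (x i : ℚ)) = 0 := by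
    apply hinj2
    rw [hzero, Matrix.mulVec_zero]
  funext i
  have := congrFun this i
  simpa using this


open Matrix

/-- `phi d u j = 5 ^ (u j * d + (j+1))` (with `j` 0-based, so exponents of distinct
coordinates lie in distinct residue classes mod `d`). For vectors `u` with positive
entries the exponent is a positive integer, so `toNat` is harmless. -/
def phi (d : ℕ) (u : Fin d → ℤ) : Fin d → ℤ :=
  fun j => 5 ^ (u j * d + (j : ℤ) + 1).toNat

theorem stmt_2 (d : ℕ) (hd : 0 < d)
    (M : Matrix (Fin d) (Fin ((d + 1) / 2)) ℤ)
    (hMpos : ∀ i j, 0 < M i j)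
    (hMinv : ∀ rows : Fin ((d + 1) / 2) → Fin d, Function.Injective rows →
      ((M.submatrix rows id).map ((↑) : ℤ → ℚ)).det ≠ 0)
    (v w : Fin d → ℤ)
    (hv : ∀ t, v t = 1 ∨ v t = -1) (hw : ∀ t, w t = 1 ∨ w t = -1)
    (y z y' z' : Fin ((d + 1) / 2) → ℤ)
    (hy : ∀ i, 0 < y i) (hz : ∀ i, 0 < z i)
    (hy' : ∀ i, 0 < y' i) (hz' : ∀ i, 0 < z' i)
    (heq : phi d (M.mulVec y) ⬝ᵥ v + phi d (M.mulVec z) ⬝ᵥ w =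
           phi d (M.mulVec y') ⬝ᵥ v + phi d (M.mulVec z') ⬝ᵥ w) :
    (2 * (Finset.univ.filter fun t => v t + w t = 0).card ≥ d →
      ((y = y' ∧ z = z') ∨ (y = z ∧ y' = z'))) ∧
    (2 * (Finset.univ.filter fun t => v t + w t ≠ 0).card ≥ d →
      ((y = y' ∧ z = z') ∨ (y = z' ∧ z = y'))) := by
  classical
  haveI : Nonempty (Fin ((d + 1) / 2)) := ⟨⟨0, by omega⟩⟩
  -- positivity of products Mu
  have hpos : ∀ (u : Fin ((d + 1) / 2) → ℤ), (∀ i, 0 < u i) → ∀ j, 1 ≤ M.mulVec u j := by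
    intro u hu j
    have h1 : 0 < ∑ k, M j k * u k :=
      Finset.sum_pos (fun k _ => mul_pos (hMpos j k) (hu k)) Finset.univ_nonempty
    simpa [Matrix.mulVec, dotProduct] using (by omega : 1 ≤ ∑ k, M j k * u k)
  have hApos := hpos y hy
  have hBpos := hpos z hz
  have hA'pos := hpos y' hy'
  have hB'pos := hpos z' hz'
  -- toNat cast helper
  have hnn : ∀ (P : ℤ) (j : Fin d), 1 ≤ P →
      (((P * d + (j : ℤ) + 1).toNat : ℤ)) = P * d + j + 1 := by
    intro P j hP
    apply Int.toNat_of_nonneg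
    have h1 : (0:ℤ) ≤ P * d := mul_nonneg (by linarith) (by positivity)
    have h2 : (0:ℤ) ≤ (j : ℤ) := Int.natCast_nonneg _
    linarith
  -- exponent → value conversion
  have hconv : ∀ (j : Fin d) (P Q : ℤ), 1 ≤ P → 1 ≤ Q →
      ((P * d + (j : ℤ) + 1).toNat = (Q * d + (j : ℤ) + 1).toNat) → P = Q := by
    intro j P Q hP hQ hEq
    have h1 := hnn P j hP
    have h2 := hnn Q j hQ
    rw [hEq] at h1
    have h3 : P * (d:ℤ) = Q * (d:ℤ) := by linarith
    exact mul_right_cancel₀ (by exact_mod_cast hd.ne') h3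
  -- row separation
  have heq' : ∑ j : Fin d,
        ((5:ℤ) ^ (M.mulVec y j * d + (j : ℤ) + 1).toNat * v j
          + 5 ^ (M.mulVec z j * d + (j : ℤ) + 1).toNat * w j)
      = ∑ j : Fin d,
        ((5:ℤ) ^ (M.mulVec y' j * d + (j : ℤ) + 1).toNat * v j
          + 5 ^ (M.mulVec z' j * d + (j : ℤ) + 1).toNat * w j) := by
    simp only [dotProduct, phi] at heq
    rw [← Finset.sum_add_distrib, ← Finset.sum_add_distrib] at heq
    exact heq
  have hrow := row_sep d hd
    (fun j => (M.mulVec y j * d + (j : ℤ) + 1).toNat)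
    (fun j => (M.mulVec z j * d + (j : ℤ) + 1).toNat)
    (fun j => (M.mulVec y' j * d + (j : ℤ) + 1).toNat)
    (fun j => (M.mulVec z' j * d + (j : ℤ) + 1).toNat)
    v w hv hw
    (fun j => ⟨M.mulVec y j, hApos j, hnn _ j (hApos j)⟩)
    (fun j => ⟨M.mulVec z j, hBpos j, hnn _ j (hBpos j)⟩)
    (fun j => ⟨M.mulVec y' j, hA'pos j, hnn _ j (hA'pos j)⟩)
    (fun j => ⟨M.mulVec z' j, hB'pos j, hnn _ j (hB'pos j)⟩)
    heq'
  -- value level row facts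
  have hrowN : ∀ j : Fin d, v j + w j ≠ 0 →
      (M.mulVec y j = M.mulVec y' j ∧ M.mulVec z j = M.mulVec z' j) ∨
      (M.mulVec y j = M.mulVec z' j ∧ M.mulVec z j = M.mulVec y' j) := by
    intro j hj
    have hvw : v j = w j := by rcases hv j with h1|h1 <;> rcases hw j with h2|h2 <;> omega
    rcases (hrow j).1 hvw with ⟨h1, h2⟩ | ⟨h1, h2⟩
    · exact Or.inl ⟨hconv j _ _ (hApos j) (hA'pos j) h1, hconv j _ _ (hBpos j) (hB'pos j) h2⟩
    · exact Or.inr ⟨hconv j _ _ (hApos j) (hB'pos j) h1, hconv j _ _ (hBpos j) (hA'pos j) h2⟩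
  have hrowS : ∀ j : Fin d, v j + w j = 0 →
      (M.mulVec y j = M.mulVec y' j ∧ M.mulVec z j = M.mulVec z' j) ∨
      (M.mulVec y j = M.mulVec z j ∧ M.mulVec y' j = M.mulVec z' j) := by
    intro j hj
    have hvw : v j = -w j := by linarith
    rcases (hrow j).2 hvw with ⟨h1, h2⟩ | ⟨h1, h2⟩
    · exact Or.inl ⟨hconv j _ _ (hApos j) (hA'pos j) h1, hconv j _ _ (hBpos j) (hB'pos j) h2⟩
    · exact Or.inr ⟨hconv j _ _ (hApos j) (hBpos j) h1, hconv j _ _ (hA'pos j) (hB'pos j) h2⟩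
  clear hrow heq heq' hnn hconv hpos
  constructor
  -- Part (i)
  · intro hcard
    have hScard : (d + 1) / 2 ≤ (Finset.univ.filter fun t => v t + w t = 0).card := by omega
    have hu1 : ∀ j ∈ (Finset.univ.filter fun t => v t + w t = 0),
        M.mulVec ((y - y') - (z - z')) j = 0 := by
      intro j hj
      have hjS : v j + w j = 0 := (Finset.mem_filter.mp hj).2
      have hval : M.mulVec ((y - y') - (z - z')) j =
          (M.mulVec y j - M.mulVec y' j) - (M.mulVec z j - M.mulVec z' j) := by
        simp [Matrix.mulVec_sub]
      rcases hrowS j hjS with ⟨h1, h2⟩ | ⟨h1, h2⟩ <;> rw [hval] <;> omega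
    have hu1z : (y - y') - (z - z') = 0 :=
      kernel_lemma d M hMinv _ _ hScard hu1
    have hpt : ∀ i, y i - y' i = z i - z' i := by
      intro i
      have h1 := congrFun hu1z i
      simp only [Pi.sub_apply, Pi.zero_apply] at h1
      omega
    by_cases hxy : y = y'
    · refine Or.inl ⟨hxy, funext fun i => ?_⟩
      have h1 := hpt i
      have h2 := congrFun hxy i
      omega
    by_cases hyz : y = z
    · refine Or.inr ⟨hyz, funext fun i => ?_⟩
      have h1 := hpt i
      have h2 := congrFun hyz i
      omega
    exfalso
    have hxne : (y - y') ≠ 0 := fun h => hxy (sub_eq_zero.mp h)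
    have hgne : (y - z) ≠ 0 := fun h => hyz (sub_eq_zero.mp h)
    have hcover : ∀ j : Fin d,
        j ∈ (Finset.univ.filter fun j => M.mulVec (y - y') j = 0)
          ∪ (Finset.univ.filter fun j => M.mulVec (y - z) j = 0) := by
      intro j
      rw [Finset.mem_union, Finset.mem_filter, Finset.mem_filter]
      have hvx : M.mulVec (y - y') j = M.mulVec y j - M.mulVec y' j := by
        simp [Matrix.mulVec_sub]
      have hvg : M.mulVec (y - z) j = M.mulVec y j - M.mulVec z j := by
        simp [Matrix.mulVec_sub]
      have hvz : (M.mulVec y j - M.mulVec y' j) - (M.mulVec z j - M.mulVec z' j) = 0 := by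
        have h1 : M.mulVec ((y - y') - (z - z')) j = 0 := by
          rw [hu1z]; simp [Matrix.mulVec_zero]
        rw [← h1]; simp [Matrix.mulVec_sub]
      by_cases hjS : v j + w j = 0
      · rcases hrowS j hjS with ⟨h1, h2⟩ | ⟨h1, h2⟩
        · exact Or.inl ⟨Finset.mem_univ j, by omega⟩
        · exact Or.inr ⟨Finset.mem_univ j, by omega⟩
      · rcases hrowN j hjS with ⟨h1, h2⟩ | ⟨h1, h2⟩
        · exact Or.inl ⟨Finset.mem_univ j, by omega⟩
        · exact Or.inl ⟨Finset.mem_univ j, by omega⟩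
    have hZx : (Finset.univ.filter fun j => M.mulVec (y - y') j = 0).card < (d + 1) / 2 := by
      by_contra hle
      push_neg at hle
      exact hxne (kernel_lemma d M hMinv _ _ hle (fun j hj => (Finset.mem_filter.mp hj).2))
    have hZg : (Finset.univ.filter fun j => M.mulVec (y - z) j = 0).card < (d + 1) / 2 := by
      by_contra hle
      push_neg at hle
      exact hgne (kernel_lemma d M hMinv _ _ hle (fun j hj => (Finset.mem_filter.mp hj).2))
    have hle1 : (Finset.univ : Finset (Fin d)).card ≤
        ((Finset.univ.filter fun j => M.mulVec (y - y') j = 0)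
          ∪ (Finset.univ.filter fun j => M.mulVec (y - z) j = 0)).card :=
      Finset.card_le_card (fun j _ => hcover j)
    have hle2 := Finset.card_union_le
      (Finset.univ.filter fun j => M.mulVec (y - y') j = 0)
      (Finset.univ.filter fun j => M.mulVec (y - z) j = 0)
    rw [Finset.card_univ, Fintype.card_fin] at hle1
    omega
  -- Part (ii)
  · intro hcard
    have hScard : (d + 1) / 2 ≤ (Finset.univ.filter fun t => v t + w t ≠ 0).card := by omega
    have hu2 : ∀ j ∈ (Finset.univ.filter fun t => v t + w t ≠ 0),
        M.mulVec ((y + z) - (y' + z')) j = 0 := by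
      intro j hj
      have hjS : v j + w j ≠ 0 := (Finset.mem_filter.mp hj).2
      have hval : M.mulVec ((y + z) - (y' + z')) j =
          (M.mulVec y j + M.mulVec z j) - (M.mulVec y' j + M.mulVec z' j) := by
        simp [Matrix.mulVec_sub, Matrix.mulVec_add]
      rcases hrowN j hjS with ⟨h1, h2⟩ | ⟨h1, h2⟩ <;> rw [hval] <;> omega
    have hu2z : (y + z) - (y' + z') = 0 :=
      kernel_lemma d M hMinv _ _ hScard hu2
    have hpt : ∀ i, y i + z i = y' i + z' i := by
      intro i
      have h1 := congrFun hu2z i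
      simp only [Pi.sub_apply, Pi.add_apply, Pi.zero_apply] at h1
      omega
    by_cases hxy : y = y'
    · refine Or.inl ⟨hxy, funext fun i => ?_⟩
      have h1 := hpt i
      have h2 := congrFun hxy i
      omega
    by_cases hyz : y = z'
    · refine Or.inr ⟨hyz, funext fun i => ?_⟩
      have h1 := hpt i
      have h2 := congrFun hyz i
      omega
    exfalso
    have hxne : (y - y') ≠ 0 := fun h => hxy (sub_eq_zero.mp h)
    have hgne : (y - z') ≠ 0 := fun h => hyz (sub_eq_zero.mp h)
    have hcover : ∀ j : Fin d,
        j ∈ (Finset.univ.filter fun j => M.mulVec (y - y') j = 0)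
          ∪ (Finset.univ.filter fun j => M.mulVec (y - z') j = 0) := by
      intro j
      rw [Finset.mem_union, Finset.mem_filter, Finset.mem_filter]
      have hvx : M.mulVec (y - y') j = M.mulVec y j - M.mulVec y' j := by
        simp [Matrix.mulVec_sub]
      have hvg : M.mulVec (y - z') j = M.mulVec y j - M.mulVec z' j := by
        simp [Matrix.mulVec_sub]
      have hvz : (M.mulVec y j + M.mulVec z j) - (M.mulVec y' j + M.mulVec z' j) = 0 := by
        have h1 : M.mulVec ((y + z) - (y' + z')) j = 0 := by
          rw [hu2z]; simp [Matrix.mulVec_zero]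
        rw [← h1]; simp [Matrix.mulVec_sub, Matrix.mulVec_add]
      by_cases hjS : v j + w j = 0
      · rcases hrowS j hjS with ⟨h1, h2⟩ | ⟨h1, h2⟩
        · exact Or.inl ⟨Finset.mem_univ j, by omega⟩
        · exact Or.inl ⟨Finset.mem_univ j, by omega⟩
      · rcases hrowN j hjS with ⟨h1, h2⟩ | ⟨h1, h2⟩
        · exact Or.inl ⟨Finset.mem_univ j, by omega⟩
        · exact Or.inr ⟨Finset.mem_univ j, by omega⟩
    have hZx : (Finset.univ.filter fun j => M.mulVec (y - y') j = 0).card < (d + 1) / 2 := by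
      by_contra hle
      push_neg at hle
      exact hxne (kernel_lemma d M hMinv _ _ hle (fun j hj => (Finset.mem_filter.mp hj).2))
    have hZg : (Finset.univ.filter fun j => M.mulVec (y - z') j = 0).card < (d + 1) / 2 := by
      by_contra hle
      push_neg at hle
      exact hgne (kernel_lemma d M hMinv _ _ hle (fun j hj => (Finset.mem_filter.mp hj).2))
    have hle1 : (Finset.univ : Finset (Fin d)).card ≤
        ((Finset.univ.filter fun j => M.mulVec (y - y') j = 0)
          ∪ (Finset.univ.filter fun j => M.mulVec (y - z') j = 0)).card :=
      Finset.card_le_card (fun j _ => hcover j)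
    have hle2 := Finset.card_union_le
      (Finset.univ.filter fun j => M.mulVec (y - y') j = 0)
      (Finset.univ.filter fun j => M.mulVec (y - z') j = 0)
    rw [Finset.card_univ, Fintype.card_fin] at hle1
    omega
end

section
/- Let d be a positive integer, let m = ⌈d/2⌉, and let M be a d × m matrix with positive integer entries such that every m × m matrix formed by selecting m rows of M is invertible over ℚ. For u ∈ (ℤ_{>0})^d define φ(u) ∈ ℤ^d by φ(u)_j = 5^(u_j · d + j). Then for any vector v ∈ {1, −1}^d, the set W_v = { φ(M·y) · v : y ∈ (ℤ_{>0})^m } ⊆ ℤ is a B₂[1] set. -/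
open Matrix

lemma digits_unique : ∀ (N : ℕ) (c c' : ℕ → ℤ), (∀ n, |c n| ≤ 2) → (∀ n, |c' n| ≤ 2) →
    (∑ n ∈ Finset.range N, c n * 5 ^ n) = (∑ n ∈ Finset.range N, c' n * 5 ^ n) →
    ∀ n < N, c n = c' n := by
  intro N
  induction N with
  | zero => intro c c' _ _ _ n hn; omega
  | succ N ih =>
    intro c c' hc hc' hsum n hn
    rw [Finset.sum_range_succ', Finset.sum_range_succ'] at hsum
    have h5 : ∀ (f : ℕ → ℤ), ∑ i ∈ Finset.range N, f (i+1) * 5^(i+1)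
        = 5 * ∑ i ∈ Finset.range N, f (i+1) * 5^i := by
      intro f
      rw [Finset.mul_sum]
      exact Finset.sum_congr rfl fun i _ => by ring
    rw [h5 c, h5 c'] at hsum
    simp only [pow_zero, mul_one] at hsum
    have h1 := abs_le.mp (hc 0); have h2 := abs_le.mp (hc' 0)
    have h0 : c 0 = c' 0 := by
      have hdvd : (5:ℤ) ∣ (c 0 - c' 0) :=
        ⟨∑ i ∈ Finset.range N, c' (i+1) * 5^i - ∑ i ∈ Finset.range N, c (i+1) * 5^i, by linarith⟩
      omega
    have htail : ∑ i ∈ Finset.range N, c (i+1) * 5^i = ∑ i ∈ Finset.range N, c' (i+1) * 5^i := by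
      omega
    have := ih (fun i => c (i+1)) (fun i => c' (i+1)) (fun n => hc _) (fun n => hc' _) htail
    cases n with
    | zero => exact h0
    | succ k => exact this k (by omega)

lemma pair_rec {a b c e : ℕ}
    (h : ∀ n, ((if a = n then (1:ℤ) else 0) + if b = n then 1 else 0)
      = ((if c = n then 1 else 0) + if e = n then 1 else 0)) :
    (a = c ∧ b = e) ∨ (a = e ∧ b = c) := by
  by_cases hac : a = c
  · have h2 := h b; clear h
    refine Or.inl ⟨hac, ?_⟩
    split_ifs at h2 <;> omega
  · by_cases hae : a = e
    · have h2 := h b; clear h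
      refine Or.inr ⟨hae, ?_⟩
      split_ifs at h2 <;> omega
    · have h1 := h a; clear h
      exfalso; split_ifs at h1 <;> omega

lemma sum_indicator (d N : ℕ) (v : Fin d → ℤ) (e : Fin d → ℕ) (he : ∀ j, e j < N) :
    ∑ n ∈ Finset.range N, (∑ j, v j * (if e j = n then (1:ℤ) else 0)) * 5 ^ n
      = ∑ j, v j * 5 ^ (e j) := by
  simp only [Finset.sum_mul]
  rw [Finset.sum_comm]
  refine Finset.sum_congr rfl fun j _ => ?_
  have : ∀ n, (v j * if e j = n then (1:ℤ) else 0) * 5 ^ n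
      = if e j = n then v j * 5 ^ n else 0 := by
    intro n; split_ifs <;> ring
  rw [Finset.sum_congr rfl fun n _ => this n, Finset.sum_ite_eq]
  rw [if_pos (Finset.mem_range.mpr (he j))]

lemma exp_inj {d u u' j j' : ℕ} (hd : 0 < d) (hj : j < d) (hj' : j' < d)
    (h : u * d + j + 1 = u' * d + j' + 1) : u = u' ∧ j = j' := by
  have h2 : u * d + j = u' * d + j' := by omega
  have hjj : j = j' := by
    have h3 := congrArg (· % d) h2
    simpa [add_comm, Nat.add_mul_mod_self_right, Nat.mod_eq_of_lt hj,
      Nat.mod_eq_of_lt hj'] using h3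
  subst hjj
  have : u * d = u' * d := by omega
  exact ⟨Nat.eq_of_mul_eq_mul_right hd this, rfl⟩

lemma rows_cancel {d : ℕ} (M : Matrix (Fin d) (Fin ((d + 1) / 2)) ℤ)
    (hMinv : ∀ rows : Fin ((d + 1) / 2) → Fin d, Function.Injective rows →
      ((M.submatrix rows id).map ((↑) : ℤ → ℚ)).det ≠ 0)
    (S : Finset (Fin d)) (hS : (d + 1) / 2 ≤ S.card)
    (w : Fin ((d + 1) / 2) → ℤ) (hw : ∀ j ∈ S, M.mulVec w j = 0) : w = 0 := by
  obtain ⟨T, hTS, hTcard⟩ := Finset.exists_subset_card_eq hS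
  set rows : Fin ((d + 1) / 2) → Fin d := fun i => (T.orderIsoOfFin hTcard i : Fin d) with hrows
  have hinj : Function.Injective rows := fun i i' h =>
    (T.orderIsoOfFin hTcard).injective (Subtype.ext h)
  have hdet : ((M.submatrix rows id).map ((↑) : ℤ → ℚ)).det ≠ 0 := hMinv rows hinj
  have hdetZ : (M.submatrix rows id).det ≠ 0 := by
    intro h0
    apply hdet
    rw [show (M.submatrix rows id).map ((↑) : ℤ → ℚ)
        = (Int.castRingHom ℚ).mapMatrix (M.submatrix rows id) from rfl,
      ← RingHom.map_det, h0]
    simp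
  have hmv : (M.submatrix rows id).mulVec w = 0 := by
    funext i
    have : (M.submatrix rows id).mulVec w i = M.mulVec w (rows i) := rfl
    rw [this, hw (rows i) (hTS (T.orderIsoOfFin hTcard i).2)]
    rfl
  exact Matrix.eq_zero_of_mulVec_eq_zero hdetZ hmv

theorem stmt_3 (d : ℕ) (hd : 0 < d)
    (M : Matrix (Fin d) (Fin ((d + 1) / 2)) ℤ)
    (hMpos : ∀ i j, 0 < M i j)
    (hMinv : ∀ rows : Fin ((d + 1) / 2) → Fin d, Function.Injective rows →
      ((M.submatrix rows id).map ((↑) : ℤ → ℚ)).det ≠ 0)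
    (v : Fin d → ℤ) (hv : ∀ t, v t = 1 ∨ v t = -1) :
    IsB2 1 {x : ℤ | ∃ y : Fin ((d + 1) / 2) → ℤ,
      (∀ i, 0 < y i) ∧ x = phi d (M.mulVec y) ⬝ᵥ v} := by
  have hmpos : 0 < (d + 1) / 2 := by omega
  have hpos : ∀ (y : Fin ((d + 1) / 2) → ℤ), (∀ i, 0 < y i) → ∀ j, 0 < M.mulVec y j := by
    intro y hy j
    have : (0:ℤ) < ∑ i, M j i * y i :=
      Finset.sum_pos (fun i _ => mul_pos (hMpos j i) (hy i)) ⟨⟨0, hmpos⟩, Finset.mem_univ _⟩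
    simpa [Matrix.mulVec, dotProduct] using this
  set E : (Fin ((d + 1) / 2) → ℤ) → Fin d → ℕ :=
    fun y j => ((M.mulVec y) j * d + (j : ℤ) + 1).toNat with hE
  have hEeq : ∀ y, (∀ i, 0 < y i) → ∀ j : Fin d,
      E y j = ((M.mulVec y) j).toNat * d + (j : ℕ) + 1 ∧ 1 ≤ ((M.mulVec y) j).toNat := by
    intro y hy j
    have h1 := hpos y hy j
    refine ⟨?_, by omega⟩
    simp only [hE]
    set k := ((M.mulVec y) j).toNat with hk
    have h2 : (M.mulVec y) j = (k : ℤ) := (Int.toNat_of_nonneg h1.le).symm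
    rw [h2]
    have h3 : ((k : ℤ) * d + (j:ℤ) + 1) = ((k * d + (j:ℕ) + 1 : ℕ) : ℤ) := by push_cast; ring
    rw [h3, Int.toNat_natCast]
  have hval : ∀ y : Fin ((d + 1) / 2) → ℤ,
      phi d (M.mulVec y) ⬝ᵥ v = ∑ j, v j * 5 ^ E y j := by
    intro y
    simp only [phi, dotProduct, hE]
    exact Finset.sum_congr rfl fun j _ => mul_comm _ _
  have hNice : ∀ y, (∀ i, 0 < y i) → ∀ (j : Fin d) (n : ℕ), E y j = n →
      ∃ w, 1 ≤ w ∧ n = w * d + (j:ℕ) + 1 := by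
    intro y hy j n hn
    exact ⟨((M.mulVec y) j).toNat, (hEeq y hy j).2, by rw [← hn, (hEeq y hy j).1]⟩
  have hNice_inj : ∀ (j j' : Fin d) (n : ℕ), (∃ w, 1 ≤ w ∧ n = w * d + (j:ℕ) + 1) →
      (∃ w, 1 ≤ w ∧ n = w * d + (j':ℕ) + 1) → j = j' := by
    rintro j j' n ⟨w, hw, rfl⟩ ⟨w', hw', h⟩
    exact Fin.ext (exp_inj hd j.isLt j'.isLt h).2
  intro ξ
  rw [Nat.cast_one, Set.encard_le_one_iff]
  rintro p q ⟨a, ⟨y1, hy1, rfl⟩, b, ⟨y2, hy2, rfl⟩, rfl, hab⟩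
      ⟨a', ⟨z1, hz1, rfl⟩, b', ⟨z2, hz2, rfl⟩, rfl, hab'⟩
  rw [hval y1, hval y2] at hab
  rw [hval z1, hval z2] at hab'
  set N : ℕ := (Finset.univ.sup fun j =>
    max (max (E y1 j) (E y2 j)) (max (E z1 j) (E z2 j))) + 1 with hN
  have hNb : ∀ j : Fin d, max (max (E y1 j) (E y2 j)) (max (E z1 j) (E z2 j)) < N :=
    fun j => Nat.lt_succ_of_le (Finset.le_sup
      (f := fun j => max (max (E y1 j) (E y2 j)) (max (E z1 j) (E z2 j))) (Finset.mem_univ j))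
  have hNy1 : ∀ j, E y1 j < N := fun j => by have := hNb j; omega
  have hNy2 : ∀ j, E y2 j < N := fun j => by have := hNb j; omega
  have hNz1 : ∀ j, E z1 j < N := fun j => by have := hNb j; omega
  have hNz2 : ∀ j, E z2 j < N := fun j => by have := hNb j; omega
  set c : ℕ → ℤ := fun n =>
    ∑ j, v j * ((if E y1 j = n then (1:ℤ) else 0) + (if E y2 j = n then 1 else 0)) with hcdef
  set c' : ℕ → ℤ := fun n =>
    ∑ j, v j * ((if E z1 j = n then (1:ℤ) else 0) + (if E z2 j = n then 1 else 0)) with hcdef'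
  have hsum : ∀ (w1 w2 : Fin ((d + 1) / 2) → ℤ), (∀ j, E w1 j < N) → (∀ j, E w2 j < N) →
      ∑ n ∈ Finset.range N, (∑ j, v j * ((if E w1 j = n then (1:ℤ) else 0)
        + (if E w2 j = n then 1 else 0))) * 5 ^ n
      = (∑ j, v j * 5 ^ E w1 j) + (∑ j, v j * 5 ^ E w2 j) := by
    intro w1 w2 h1 h2
    have hsplit : ∀ n ∈ Finset.range N, (∑ j, v j * ((if E w1 j = n then (1:ℤ) else 0)
        + (if E w2 j = n then 1 else 0))) * 5 ^ n
        = (∑ j, v j * (if E w1 j = n then (1:ℤ) else 0)) * 5 ^ n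
          + (∑ j, v j * (if E w2 j = n then (1:ℤ) else 0)) * 5 ^ n := by
      intro n _
      rw [← add_mul, ← Finset.sum_add_distrib]
      congr 1
      exact Finset.sum_congr rfl fun j _ => mul_add _ _ _
    rw [Finset.sum_congr rfl hsplit, Finset.sum_add_distrib,
      sum_indicator d N v (E w1) h1, sum_indicator d N v (E w2) h2]
  have hbound : ∀ (w1 w2 : Fin ((d + 1) / 2) → ℤ), (∀ i, 0 < w1 i) → (∀ i, 0 < w2 i) →
      ∀ n, |∑ j, v j * ((if E w1 j = n then (1:ℤ) else 0) + (if E w2 j = n then 1 else 0))| ≤ 2 := by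
    intro w1 w2 hw1 hw2 n
    by_cases hex : ∃ j : Fin d, E w1 j = n ∨ E w2 j = n
    · obtain ⟨j₀, hj₀⟩ := hex
      have hn0 : ∃ w, 1 ≤ w ∧ n = w * d + (j₀:ℕ) + 1 := by
        rcases hj₀ with h | h
        exacts [hNice w1 hw1 j₀ n h, hNice w2 hw2 j₀ n h]
      have heq : (∑ j, v j * ((if E w1 j = n then (1:ℤ) else 0)
          + (if E w2 j = n then 1 else 0)))
          = v j₀ * ((if E w1 j₀ = n then (1:ℤ) else 0) + (if E w2 j₀ = n then 1 else 0)) := by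
        refine Finset.sum_eq_single_of_mem j₀ (Finset.mem_univ _) fun j _ hj => ?_
        have hn1 : E w1 j ≠ n := fun h => hj (hNice_inj j j₀ n (hNice w1 hw1 j n h) hn0)
        have hn2 : E w2 j ≠ n := fun h => hj (hNice_inj j j₀ n (hNice w2 hw2 j n h) hn0)
        rw [if_neg hn1, if_neg hn2]; ring
      rw [heq]
      rcases hv j₀ with h | h <;> rw [h] <;> split_ifs <;> norm_num
    · push_neg at hex
      rw [Finset.sum_eq_zero fun j _ => by rw [if_neg (hex j).1, if_neg (hex j).2]; ring]
      norm_num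
  have hCsum : ∑ n ∈ Finset.range N, c n * 5 ^ n = ξ := by
    rw [hcdef]
    rw [hsum y1 y2 hNy1 hNy2]
    exact hab
  have hC'sum : ∑ n ∈ Finset.range N, c' n * 5 ^ n = ξ := by
    rw [hcdef']
    rw [hsum z1 z2 hNz1 hNz2]
    exact hab'
  have hcc : ∀ n, c n = c' n := by
    intro n
    by_cases hn : n < N
    · exact digits_unique N c c' (hbound y1 y2 hy1 hy2) (hbound z1 z2 hz1 hz2)
        (by rw [hCsum, hC'sum]) n hn
    · have hz : ∀ (w1 w2 : Fin ((d + 1) / 2) → ℤ), (∀ j, E w1 j < N) → (∀ j, E w2 j < N) →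
          ∑ j, v j * ((if E w1 j = n then (1:ℤ) else 0) + (if E w2 j = n then 1 else 0)) = 0 := by
        intro w1 w2 h1 h2
        exact Finset.sum_eq_zero fun j _ => by
          rw [if_neg (by have := h1 j; omega), if_neg (by have := h2 j; omega)]; ring
      show (∑ j, v j * _) = (∑ j, v j * _)
      rw [hz y1 y2 hNy1 hNy2, hz z1 z2 hNz1 hNz2]
  have hkey : ∀ j : Fin d, ∀ n : ℕ,
      ((if E y1 j = n then (1:ℤ) else 0) + if E y2 j = n then 1 else 0)
        = ((if E z1 j = n then 1 else 0) + if E z2 j = n then 1 else 0) := by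
    intro j n
    by_cases hn : ∃ w, 1 ≤ w ∧ n = w * d + (j:ℕ) + 1
    · have e1 : c n = v j * ((if E y1 j = n then (1:ℤ) else 0)
          + (if E y2 j = n then 1 else 0)) := by
        refine Finset.sum_eq_single_of_mem j (Finset.mem_univ _) fun j' _ hj' => ?_
        have hn1 : E y1 j' ≠ n := fun h => hj' (hNice_inj j' j n (hNice y1 hy1 j' n h) hn)
        have hn2 : E y2 j' ≠ n := fun h => hj' (hNice_inj j' j n (hNice y2 hy2 j' n h) hn)
        rw [if_neg hn1, if_neg hn2]; ring
      have e2 : c' n = v j * ((if E z1 j = n then (1:ℤ) else 0)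
          + (if E z2 j = n then 1 else 0)) := by
        refine Finset.sum_eq_single_of_mem j (Finset.mem_univ _) fun j' _ hj' => ?_
        have hn1 : E z1 j' ≠ n := fun h => hj' (hNice_inj j' j n (hNice z1 hz1 j' n h) hn)
        have hn2 : E z2 j' ≠ n := fun h => hj' (hNice_inj j' j n (hNice z2 hz2 j' n h) hn)
        rw [if_neg hn1, if_neg hn2]; ring
      have h3 := hcc n
      rw [e1, e2] at h3
      rcases hv j with h | h <;> rw [h] at h3 <;> linarith
    · have hne : ∀ (y : Fin ((d + 1) / 2) → ℤ), (∀ i, 0 < y i) → E y j ≠ n :=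
        fun y hy h => hn (hNice y hy j n h)
      rw [if_neg (hne y1 hy1), if_neg (hne y2 hy2), if_neg (hne z1 hz1), if_neg (hne z2 hz2)]
  have hpair := fun j => pair_rec (hkey j)
  have hmv : ∀ (y z : Fin ((d + 1) / 2) → ℤ), (∀ i, 0 < y i) → (∀ i, 0 < z i) →
      ∀ j : Fin d, E y j = E z j → M.mulVec y j = M.mulVec z j := by
    intro y z hy hz j h
    have h1 := hEeq y hy j
    have h2 := hEeq z hz j
    have h3 : ((M.mulVec y) j).toNat * d + (j:ℕ) + 1
        = ((M.mulVec z) j).toNat * d + (j:ℕ) + 1 := by rw [← h1.1, ← h2.1, h]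
    have h4 := (exp_inj hd j.isLt j.isLt h3).1
    have h5 := hpos y hy j
    have h6 := hpos z hz j
    omega
  classical
  set P : Finset (Fin d) := Finset.univ.filter
    (fun j => M.mulVec y1 j = M.mulVec z1 j ∧ M.mulVec y2 j = M.mulVec z2 j) with hP
  set Q : Finset (Fin d) := Finset.univ.filter
    (fun j => M.mulVec y1 j = M.mulVec z2 j ∧ M.mulVec y2 j = M.mulVec z1 j) with hQ
  have hcover : ∀ j, j ∈ P ∨ j ∈ Q := by
    intro j
    rcases hpair j with ⟨h1, h2⟩ | ⟨h1, h2⟩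
    · exact Or.inl (Finset.mem_filter.mpr ⟨Finset.mem_univ _,
        hmv y1 z1 hy1 hz1 j h1, hmv y2 z2 hy2 hz2 j h2⟩)
    · exact Or.inr (Finset.mem_filter.mpr ⟨Finset.mem_univ _,
        hmv y1 z2 hy1 hz2 j h1, hmv y2 z1 hy2 hz1 j h2⟩)
  have hcard : d ≤ P.card + Q.card := by
    have hsub : (Finset.univ : Finset (Fin d)) ⊆ P ∪ Q :=
      fun j _ => Finset.mem_union.mpr (hcover j)
    calc d = (Finset.univ : Finset (Fin d)).card := (Finset.card_fin d).symm
    _ ≤ (P ∪ Q).card := Finset.card_le_card hsub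
    _ ≤ P.card + Q.card := Finset.card_union_le _ _
  have hcase : (d + 1) / 2 ≤ P.card ∨ (d + 1) / 2 ≤ Q.card := by omega
  rcases hcase with hbig | hbig
  · -- y1 = z1, y2 = z2
    have hz1eq : y1 = z1 := by
      have h0 := rows_cancel M hMinv P hbig (y1 - z1) ?_
      · rwa [sub_eq_zero] at h0
      · intro j hj
        obtain ⟨hA, _⟩ := (Finset.mem_filter.mp hj).2
        rw [Matrix.mulVec_sub]
        simp [hA]
    have hall : ∀ j ∈ (Finset.univ : Finset (Fin d)), M.mulVec (y2 - z2) j = 0 := by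
      intro j _
      rcases hcover j with hj | hj
      · obtain ⟨_, hB⟩ := (Finset.mem_filter.mp hj).2
        rw [Matrix.mulVec_sub]; simp [hB]
      · obtain ⟨hA, hB⟩ := (Finset.mem_filter.mp hj).2
        have : M.mulVec y2 j = M.mulVec z2 j := by
          calc M.mulVec y2 j = M.mulVec z1 j := hB
          _ = M.mulVec y1 j := by rw [hz1eq]
          _ = M.mulVec z2 j := hA
        rw [Matrix.mulVec_sub]; simp [this]
    have hz2eq : y2 = z2 := by
      have h0 := rows_cancel M hMinv Finset.univ (by simp; omega) (y2 - z2) hall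
      rwa [sub_eq_zero] at h0
    rw [hz1eq, hz2eq]
  · -- y1 = z2, y2 = z1
    have hz1eq : y1 = z2 := by
      have h0 := rows_cancel M hMinv Q hbig (y1 - z2) ?_
      · rwa [sub_eq_zero] at h0
      · intro j hj
        obtain ⟨hA, _⟩ := (Finset.mem_filter.mp hj).2
        rw [Matrix.mulVec_sub]; simp [hA]
    have hall : ∀ j ∈ (Finset.univ : Finset (Fin d)), M.mulVec (y2 - z1) j = 0 := by
      intro j _
      rcases hcover j with hj | hj
      · obtain ⟨hA, hB⟩ := (Finset.mem_filter.mp hj).2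
        have : M.mulVec y2 j = M.mulVec z1 j := by
          calc M.mulVec y2 j = M.mulVec z2 j := hB
          _ = M.mulVec y1 j := by rw [hz1eq]
          _ = M.mulVec z1 j := hA
        rw [Matrix.mulVec_sub]; simp [this]
      · obtain ⟨_, hB⟩ := (Finset.mem_filter.mp hj).2
        rw [Matrix.mulVec_sub]; simp [hB]
    have hz2eq : y2 = z1 := by
      have h0 := rows_cancel M hMinv Finset.univ (by simp; omega) (y2 - z1) hall
      rwa [sub_eq_zero] at h0
    rw [hz1eq, hz2eq]
    exact Sym2.eq_swap
end

section
/- Let d be a positive integer, let m = ⌈d/2⌉, and let M be a d × m matrix with positive integer entries such that every m × m matrix formed by selecting m rows of M is invertible over ℚ. For u ∈ (ℤ_{>0})^d define φ(u) ∈ ℤ^d by φ(u)_j = 5^(u_j · d + j), and for v ∈ {1, −1}^d let W_v = { φ(M·y) · v : y ∈ (ℤ_{>0})^m } ⊆ ℤ. Suppose v₁, …, v_k ∈ {1, −1}^d satisfy: (i) for all i ≠ j, v_i + v_j has strictly more than d/2 coordinates equal to 0, and (ii) v_i + v_j = v_h + v_ℓ implies {i, j} = {h, ℓ}. Then W = W_{v₁}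 ∪ ⋯ ∪ W_{v_k} is a B₂°[2] set. -/
open Matrix

/-- `S ⊆ G` is a `B₂°[g]` set: every nonzero element has at most `g` representations
as a difference `a - b` with `a, b ∈ S`. -/
def IsB2Circ {G : Type} [AddCommGroup G] (g : ℕ) (S : Set G) : Prop :=
  ∀ ξ : G, ξ ≠ 0 → {p : G × G | p.1 ∈ S ∧ p.2 ∈ S ∧ p.1 - p.2 = ξ}.encard ≤ g

/-- The set `W_v = { phi(M·y) · v : y ∈ (ℤ_{>0})^m } ⊆ ℤ`. -/
def Wset (d : ℕ) (M : Matrix (Fin d) (Fin ((d + 1) / 2)) ℤ) (v : Fin d → ℤ) : Set ℤ :=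
  {x : ℤ | ∃ y : Fin ((d + 1) / 2) → ℤ, (∀ i, 0 < y i) ∧ x = phi d (M.mulVec y) ⬝ᵥ v}

namespace B2Aux

lemma five_unique : ∀ (N : ℕ) (G H : ℕ → ℤ), (∀ e, |G e| ≤ 2) → (∀ e, |H e| ≤ 2) →
    (∑ e ∈ Finset.range N, G e * 5 ^ e) = (∑ e ∈ Finset.range N, H e * 5 ^ e) →
    ∀ e < N, G e = H e := by
  intro N
  induction N with
  | zero => intro G H _ _ _ e he; omega
  | succ n ih =>
    intro G H hG hH hsum e he
    rw [Finset.sum_range_succ' (fun e => G e * 5 ^ e) n,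
        Finset.sum_range_succ' (fun e => H e * 5 ^ e) n] at hsum
    have h5 : ∀ F : ℕ → ℤ, ∑ i ∈ Finset.range n, F (i + 1) * 5 ^ (i + 1)
        = 5 * ∑ i ∈ Finset.range n, F (i + 1) * 5 ^ i := by
      intro F; rw [Finset.mul_sum]; exact Finset.sum_congr rfl fun i _ => by ring
    rw [h5 G, h5 H] at hsum
    simp only [pow_zero, mul_one] at hsum
    have hG0 := abs_le.1 (hG 0)
    have hH0 := abs_le.1 (hH 0)
    have h0 : G 0 = H 0 := by omega
    have hrec : ∑ i ∈ Finset.range n, G (i + 1) * 5 ^ i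
        = ∑ i ∈ Finset.range n, H (i + 1) * 5 ^ i := by
      have h5' : (5 : ℤ) * ∑ i ∈ Finset.range n, G (i + 1) * 5 ^ i
          = 5 * ∑ i ∈ Finset.range n, H (i + 1) * 5 ^ i := by omega
      exact mul_left_cancel₀ (by norm_num) h5'
    have := ih (fun e => G (e + 1)) (fun e => H (e + 1)) (fun e => hG _) (fun e => hH _) hrec
    match e, he with
    | 0, _ => exact h0
    | (e + 1), he => exact this e (by omega)

lemma pow5_inj {a b : ℕ} (h : (5:ℤ) ^ a = 5 ^ b) : a = b := by
  have h' : ((5 ^ a : ℕ) : ℤ) = ((5 ^ b : ℕ) : ℤ) := by push_cast; exact h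
  exact Nat.pow_right_injective (by norm_num) (Nat.cast_injective h')

lemma unit_pow_eq {ε ε' : ℤ} (hε : ε = 1 ∨ ε = -1) (hε' : ε' = 1 ∨ ε' = -1) {a b : ℕ}
    (h : ε * 5 ^ a = ε' * 5 ^ b) : ε = ε' ∧ a = b := by
  have ha : (0:ℤ) < 5 ^ a := by positivity
  have hb : (0:ℤ) < 5 ^ b := by positivity
  rcases hε with rfl | rfl <;> rcases hε' with rfl | rfl
  · exact ⟨rfl, pow5_inj (by linarith)⟩
  · exfalso; linarith
  · exfalso; linarith
  · exact ⟨rfl, pow5_inj (by linarith)⟩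

lemma two_eq_two {s u : ℤ} (hs : s = 2 ∨ s = -2) (hu : u = 2 ∨ u = -2) {A C : ℕ}
    (h : s * 5 ^ A = u * 5 ^ C) : s = u ∧ A = C := by
  have ha : (0:ℤ) < 5 ^ A := by positivity
  have hb : (0:ℤ) < 5 ^ C := by positivity
  rcases hs with rfl | rfl <;> rcases hu with rfl | rfl
  · exact ⟨rfl, pow5_inj (by linarith)⟩
  · exfalso; linarith
  · exfalso; linarith
  · exact ⟨rfl, pow5_inj (by linarith)⟩

lemma L3' {ε ε3 ε4 : ℤ} (hε : ε = 1 ∨ ε = -1) (h3 : ε3 = 1 ∨ ε3 = -1) (h4 : ε4 = 1 ∨ ε4 = -1)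
    {A C D : ℕ} (hCD : C < D) (h : 2 * ε * 5 ^ A = ε3 * 5 ^ C + ε4 * 5 ^ D) : False := by
  have h5D : (5:ℤ) ^ D = 5 ^ C * 5 ^ (D - C) := by rw [← pow_add]; congr 1; omega
  set t : ℤ := ε3 + ε4 * 5 ^ (D - C) with ht
  have heq : 2 * ε * 5 ^ A = 5 ^ C * t := by rw [ht]; rw [h5D] at h; ring_nf; ring_nf at h; linarith
  have hpow : (5:ℤ) ≤ 5 ^ (D - C) := by
    calc (5:ℤ) = 5 ^ 1 := (pow_one 5).symm
    _ ≤ 5 ^ (D - C) := pow_le_pow_right₀ (by norm_num) (by omega)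
  have ht4 : 4 ≤ t ∨ t ≤ -4 := by
    rcases h3 with rfl | rfl <;> rcases h4 with rfl | rfl <;> [left; right; left; right] <;> nlinarith
  rcases le_or_gt A C with hAC | hAC
  · have h5C : (5:ℤ) ^ C = 5 ^ A * 5 ^ (C - A) := by rw [← pow_add]; congr 1; omega
    have hc : 2 * ε = 5 ^ (C - A) * t := by
      have hA : (5:ℤ) ^ A ≠ 0 := by positivity
      apply mul_left_cancel₀ hA
      rw [h5C] at heq; linarith [heq]
    have hp : (1:ℤ) ≤ 5 ^ (C - A) := one_le_pow₀ (by norm_num)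
    rcases ht4 with h4' | h4'
    · have : (4:ℤ) ≤ 5 ^ (C - A) * t := by nlinarith
      rcases hε with rfl | rfl <;> linarith
    · have : 5 ^ (C - A) * t ≤ (-4:ℤ) := by nlinarith
      rcases hε with rfl | rfl <;> linarith
  · have h5A : (5:ℤ) ^ A = 5 ^ C * (5 * 5 ^ (A - C - 1)) := by
      rw [← pow_succ']
      rw [← pow_add]; congr 1; omega
    have hc : t = 5 * (2 * ε * 5 ^ (A - C - 1)) := by
      have hC : (5:ℤ) ^ C ≠ 0 := by positivity
      apply mul_left_cancel₀ hC
      rw [h5A] at heq; linarith [heq]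
    have hd : (5:ℤ) ∣ t := ⟨_, hc⟩
    have hd2 : (5:ℤ) ∣ ε4 * 5 ^ (D - C) := by
      have : (5:ℤ) ^ (D - C) = 5 * 5 ^ (D - C - 1) := by
        rw [← pow_succ']; congr 1; omega
      exact ⟨ε4 * 5 ^ (D - C - 1), by rw [this]; ring⟩
    have hd3 : (5:ℤ) ∣ ε3 := by
      have : ε3 = t - ε4 * 5 ^ (D - C) := by rw [ht]; ring
      rw [this]; exact dvd_sub hd hd2
    rcases h3 with rfl | rfl <;> omega

lemma L3 {ε ε3 ε4 : ℤ} (hε : ε = 1 ∨ ε = -1) (h3 : ε3 = 1 ∨ ε3 = -1) (h4 : ε4 = 1 ∨ ε4 = -1)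
    {A C D : ℕ} (hCD : C ≠ D) (h : 2 * ε * 5 ^ A = ε3 * 5 ^ C + ε4 * 5 ^ D) : False := by
  rcases Nat.lt_or_ge C D with hlt | hge
  · exact L3' hε h3 h4 hlt h
  · exact L3' (A := A) (C := D) (D := C) hε h4 h3 (by omega) (by linarith)

lemma sum_two_ind {N X Y : ℕ} (a b : ℤ) (hX : X < N) (hY : Y < N) :
    ∑ e ∈ Finset.range N, ((if X = e then a else 0) + (if Y = e then b else 0)) * 5 ^ e
      = a * 5 ^ X + b * 5 ^ Y := by
  have step : ∀ e ∈ Finset.range N,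
      ((if X = e then a else 0) + (if Y = e then b else 0)) * 5 ^ e
        = (if X = e then a * 5 ^ e else 0) + (if Y = e then b * 5 ^ e else 0) := by
    intro e _; split_ifs <;> ring
  rw [Finset.sum_congr rfl step, Finset.sum_add_distrib, Finset.sum_ite_eq,
    Finset.sum_ite_eq, if_pos (Finset.mem_range.2 hX), if_pos (Finset.mem_range.2 hY)]

lemma ind_bound {X Y : ℕ} {a b : ℤ} (ha : a = 1 ∨ a = -1) (hb : b = 1 ∨ b = -1) (e : ℕ) :
    |(if X = e then a else 0) + (if Y = e then b else 0)| ≤ 2 := by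
  rw [abs_le]
  have b1 : -1 ≤ (if X = e then a else 0) ∧ (if X = e then a else 0) ≤ 1 := by
    constructor <;> split <;> omega
  have b2 : -1 ≤ (if Y = e then b else 0) ∧ (if Y = e then b else 0) ≤ 1 := by
    constructor <;> split <;> omega
  omega

lemma L5 {ε1 ε2 ε3 ε4 : ℤ} (h1 : ε1 = 1 ∨ ε1 = -1) (h2 : ε2 = 1 ∨ ε2 = -1)
    (h3 : ε3 = 1 ∨ ε3 = -1) (h4 : ε4 = 1 ∨ ε4 = -1) {A B C D : ℕ}
    (hAB : A ≠ B) (hAC : A ≠ C) (hAD : A ≠ D)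
    (h : ε1 * 5 ^ A + ε2 * 5 ^ B = ε3 * 5 ^ C + ε4 * 5 ^ D) : False := by
  obtain ⟨N, hA', hB', hC', hD'⟩ : ∃ N, A < N ∧ B < N ∧ C < N ∧ D < N :=
    ⟨A + B + C + D + 1, by omega, by omega, by omega, by omega⟩
  have key := five_unique N
    (fun e => (if A = e then ε1 else 0) + (if B = e then ε2 else 0))
    (fun e => (if C = e then ε3 else 0) + (if D = e then ε4 else 0))
    (fun e => ind_bound h1 h2 e) (fun e => ind_bound h3 h4 e)
    (by rw [sum_two_ind ε1 ε2 hA' hB', sum_two_ind ε3 ε4 hC' hD']; exact h) A hA'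
  simp only at key
  rw [if_true, if_neg (Ne.symm hAB), if_neg (Ne.symm hAC), if_neg (Ne.symm hAD)] at key
  omega

lemma PT {ε1 ε2 ε3 ε4 : ℤ} (h1 : ε1 = 1 ∨ ε1 = -1) (h2 : ε2 = 1 ∨ ε2 = -1)
    (h3 : ε3 = 1 ∨ ε3 = -1) (h4 : ε4 = 1 ∨ ε4 = -1) {A B C D : ℕ}
    (h : ε1 * 5 ^ A + ε2 * 5 ^ B = ε3 * 5 ^ C + ε4 * 5 ^ D) :
    (A = C ∧ B = D ∧ ε1 = ε3 ∧ ε2 = ε4) ∨ (A = D ∧ B = C ∧ ε1 = ε4 ∧ ε2 = ε3) ∨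
    (A = B ∧ ε1 = -ε2 ∧ C = D ∧ ε3 = -ε4) := by
  by_cases hAB : A = B
  · subst hAB
    by_cases hCD : C = D
    · subst hCD
      have h' : (ε1 + ε2) * 5 ^ A = (ε3 + ε4) * 5 ^ C := by linear_combination h
      by_cases h12 : ε1 = -ε2
      · have hL : ε1 + ε2 = 0 := by omega
        have hR : (ε3 + ε4) * 5 ^ C = 0 := by rw [← h', hL]; ring
        have hC0 : (5:ℤ) ^ C ≠ 0 := by positivity
        have : ε3 + ε4 = 0 := by
          rcases mul_eq_zero.1 hR with h0 | h0
          · exact h0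
          · exact absurd h0 hC0
        exact Or.inr (Or.inr ⟨rfl, h12, rfl, by omega⟩)
      · have h12' : ε1 = ε2 := by omega
        have h34 : ¬ ε3 = -ε4 := by
          intro hc
          have : (ε1 + ε2) * 5 ^ A = 0 := by rw [h', hc]; ring
          have hA0 : (5:ℤ) ^ A ≠ 0 := by positivity
          rcases mul_eq_zero.1 this with h0 | h0
          · omega
          · exact hA0 h0
        have h34' : ε3 = ε4 := by omega
        have := two_eq_two (s := ε1 + ε2) (u := ε3 + ε4) (by omega) (by omega) h'
        exact Or.inl ⟨this.2, this.2, by omega, by omega⟩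
    · exfalso
      by_cases h12 : ε1 = -ε2
      · have hR : ε3 * 5 ^ C = (-ε4) * 5 ^ D := by linear_combination -h + 5 ^ A * h12
        exact hCD (unit_pow_eq h3 (show -ε4 = 1 ∨ -ε4 = -1 by omega) hR).2
      · have h12' : ε1 = ε2 := by omega
        exact L3 (ε := ε1) (ε3 := ε3) (ε4 := ε4) (A := A) (C := C) (D := D) h1 h3 h4 hCD
          (by linear_combination h + 5 ^ A * h12')
  · by_cases hCD : C = D
    · exfalso
      subst hCD
      by_cases h34 : ε3 = -ε4
      · have hL : ε1 * 5 ^ A = (-ε2) * 5 ^ B := by linear_combination h + 5 ^ C * h34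
        exact hAB (unit_pow_eq h1 (show -ε2 = 1 ∨ -ε2 = -1 by omega) hL).2
      · have h34' : ε3 = ε4 := by omega
        exact L3 (ε := ε3) (ε3 := ε1) (ε4 := ε2) (A := C) (C := A) (D := B) h3 h1 h2 hAB
          (by linear_combination -h + 5 ^ C * h34')
    · by_cases hAC : A = C
      · subst hAC
        have h13 : ε1 = ε3 := by
          by_contra hne
          have h3' : ε3 = -ε1 := by omega
          have h' : 2 * ε1 * 5 ^ A = ε4 * 5 ^ D + (-ε2) * 5 ^ B := by
            linear_combination h + 5 ^ A * h3'
          by_cases hBD : B = D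
          · subst hBD
            have h'' : (2 * ε1) * 5 ^ A = (ε4 + -ε2) * 5 ^ B := by linear_combination h'
            by_cases h24 : ε4 = ε2
            · have : (2 * ε1) * 5 ^ A = 0 := by rw [h'', h24]; ring
              have hA0 : (5:ℤ) ^ A ≠ 0 := by positivity
              rcases mul_eq_zero.1 this with h0 | h0
              · omega
              · exact hA0 h0
            · have h24' : ε4 = -ε2 := by omega
              have := two_eq_two (s := 2 * ε1) (u := ε4 + -ε2) (by omega) (by omega) h''
              exact hAB this.2
          · exact L3 (ε := ε1) (ε3 := ε4) (ε4 := -ε2) (A := A) (C := D) (D := B) h1 h4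
              (show -ε2 = 1 ∨ -ε2 = -1 by omega) (Ne.symm hBD) h'
        have h' : ε2 * 5 ^ B = ε4 * 5 ^ D := by linear_combination h - 5 ^ A * h13
        have := unit_pow_eq h2 h4 h'
        exact Or.inl ⟨rfl, this.2, h13, this.1⟩
      · by_cases hAD : A = D
        · subst hAD
          have h14 : ε1 = ε4 := by
            by_contra hne
            have h4' : ε4 = -ε1 := by omega
            have h' : 2 * ε1 * 5 ^ A = ε3 * 5 ^ C + (-ε2) * 5 ^ B := by
              linear_combination h + 5 ^ A * h4'
            by_cases hBC : B = C
            · subst hBC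
              have h'' : (2 * ε1) * 5 ^ A = (ε3 + -ε2) * 5 ^ B := by linear_combination h'
              by_cases h23 : ε3 = ε2
              · have : (2 * ε1) * 5 ^ A = 0 := by rw [h'', h23]; ring
                have hA0 : (5:ℤ) ^ A ≠ 0 := by positivity
                rcases mul_eq_zero.1 this with h0 | h0
                · omega
                · exact hA0 h0
              · have h23' : ε3 = -ε2 := by omega
                have := two_eq_two (s := 2 * ε1) (u := ε3 + -ε2) (by omega) (by omega) h''
                exact hAB this.2
            · exact L3 (ε := ε1) (ε3 := ε3) (ε4 := -ε2) (A := A) (C := C) (D := B) h1 h3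
                (show -ε2 = 1 ∨ -ε2 = -1 by omega) (Ne.symm hBC) h'
          have h' : ε2 * 5 ^ B = ε3 * 5 ^ C := by linear_combination h - 5 ^ A * h14
          have := unit_pow_eq h2 h3 h'
          exact Or.inr (Or.inl ⟨rfl, this.2, h14, this.1⟩)
        · exact absurd h (fun h => L5 h1 h2 h3 h4 hAB hAC hAD h)

lemma one_le_mulVec {d : ℕ} (hd : 0 < d) (M : Matrix (Fin d) (Fin ((d + 1) / 2)) ℤ)
    (hMpos : ∀ i j, 0 < M i j) (y : Fin ((d + 1) / 2) → ℤ) (hy : ∀ i, 0 < y i) (t : Fin d) :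
    1 ≤ M.mulVec y t := by
  have hm : 0 < (d + 1) / 2 := by omega
  have hterm : ∀ j ∈ Finset.univ, (1:ℤ) ≤ M t j * y j := by
    intro j _
    have h1 := hMpos t j
    have h2 := hy j
    nlinarith
  have hsum := Finset.sum_le_sum hterm
  rw [Finset.sum_const, Finset.card_univ, Fintype.card_fin] at hsum
  have : (1:ℤ) ≤ ((d+1)/2 : ℕ) • (1:ℤ) := by
    rw [nsmul_eq_mul, mul_one]
    exact_mod_cast hm
  calc (1:ℤ) ≤ _ := this
  _ ≤ _ := hsum

lemma rows_eq {d : ℕ} (M : Matrix (Fin d) (Fin ((d + 1) / 2)) ℤ)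
    (hMinv : ∀ rows : Fin ((d + 1) / 2) → Fin d, Function.Injective rows →
      ((M.submatrix rows id).map ((↑) : ℤ → ℚ)).det ≠ 0)
    (T : Finset (Fin d)) (hT : (d + 1) / 2 ≤ T.card)
    (w w' : Fin ((d + 1) / 2) → ℤ) (h : ∀ t ∈ T, M.mulVec w t = M.mulVec w' t) : w = w' := by
  set rows : Fin ((d + 1) / 2) → Fin d := fun i => (T.equivFin.symm (Fin.castLE hT i) : Fin d)
    with hrows
  have hrowsmem : ∀ i, rows i ∈ T := fun i => (T.equivFin.symm (Fin.castLE hT i)).2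
  have hrowsinj : Function.Injective rows := by
    intro i j hij
    exact Fin.castLE_injective hT (T.equivFin.symm.injective (Subtype.ext hij))
  have hdet := hMinv rows hrowsinj
  set Mq := (M.submatrix rows id).map ((↑) : ℤ → ℚ) with hMq
  have hU : IsUnit Mq := (Matrix.isUnit_iff_isUnit_det Mq).2 (isUnit_iff_ne_zero.2 hdet)
  have hinj : Function.Injective Mq.mulVec := Matrix.mulVec_injective_iff_isUnit.2 hU
  have hcast : Mq.mulVec (fun j => (w j : ℚ)) = Mq.mulVec (fun j => (w' j : ℚ)) := by
    funext i
    have h0 := h (rows i) (hrowsmem i)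
    simp only [Matrix.mulVec, dotProduct] at h0 ⊢
    have : ∀ (u : Fin ((d+1)/2) → ℤ), (∑ j, Mq i j * (u j : ℚ))
        = ((∑ j, M (rows i) j * u j : ℤ) : ℚ) := by
      intro u
      rw [hMq]
      push_cast
      apply Finset.sum_congr rfl
      intro j _
      simp [Matrix.map_apply, Matrix.submatrix_apply]
    rw [this w, this w', h0]
  have := hinj hcast
  funext j
  have := congrFun this j
  exact_mod_cast this

lemma index_eq {d k : ℕ} (v : Fin k → Fin d → ℤ)
    (hv : ∀ i t, v i t = 1 ∨ v i t = -1)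
    (hzeros : ∀ i j, i ≠ j → 2 * (Finset.univ.filter fun t => v i t + v j t = 0).card > d)
    (a b : Fin k) (T : Finset (Fin d)) (hT : 2 * T.card > d)
    (h : ∀ t ∈ T, v a t = v b t) : a = b := by
  by_contra hab
  have h0 := hzeros a b hab
  have hdisj : Disjoint T (Finset.univ.filter fun t => v a t + v b t = 0) := by
    rw [Finset.disjoint_left]
    intro t ht ht0
    rw [Finset.mem_filter] at ht0
    have h1 := h t ht
    rcases hv a t with h' | h' <;> omega
  have hcard := Finset.card_union_of_disjoint hdisj
  have hle : (T ∪ Finset.univ.filter fun t => v a t + v b t = 0).card ≤ d := by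
    calc _ ≤ (Finset.univ : Finset (Fin d)).card := Finset.card_le_univ _
    _ = d := by rw [Finset.card_univ, Fintype.card_fin]
  omega

lemma class_eq {d : ℕ} {s t : Fin d} {a b : ℕ}
    (h : (s:ℕ) + 1 + d * a = (t:ℕ) + 1 + d * b) : s = t ∧ a = b := by
  have hd : 0 < d := s.pos
  have h' : (s:ℕ) + d * a = (t:ℕ) + d * b := by omega
  have hs : ((s:ℕ) + d * a) % d = (s:ℕ) := by
    rw [Nat.add_mul_mod_self_left]; exact Nat.mod_eq_of_lt s.2
  have ht : ((t:ℕ) + d * b) % d = (t:ℕ) := by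
    rw [Nat.add_mul_mod_self_left]; exact Nat.mod_eq_of_lt t.2
  have hst : (s:ℕ) = (t:ℕ) := by rw [← hs, ← ht, h']
  refine ⟨Fin.ext hst, ?_⟩
  have : d * a = d * b := by omega
  exact Nat.eq_of_mul_eq_mul_left hd this

lemma phi_exp {d : ℕ} (u : Fin d → ℤ) (hu : ∀ t, 1 ≤ u t) (t : Fin d) :
    phi d u t = 5 ^ ((t:ℕ) + 1 + d * (u t).toNat) := by
  unfold phi
  congr 1
  have h0 : 0 ≤ u t := by linarith [hu t]
  have : (u t * d + (t:ℤ) + 1) = (((t:ℕ) + 1 + d * (u t).toNat : ℕ) : ℤ) := by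
    push_cast [Int.toNat_of_nonneg h0]
    ring
  rw [this, Int.toNat_natCast]

lemma class_sum {d : ℕ} (E F : Fin d → ℕ) (a b : Fin d → ℤ) (t : Fin d)
    (S : Finset ℕ) (hS : ∀ e ∈ S, ∃ nn, e = (t:ℕ) + 1 + d * nn)
    (hEc : ∀ s, ∃ nn, E s = (s:ℕ) + 1 + d * nn)
    (hFc : ∀ s, ∃ nn, F s = (s:ℕ) + 1 + d * nn)
    (hEmem : E t ∈ S) (hFmem : F t ∈ S) :
    ∑ e ∈ S, (∑ s, ((if E s = e then a s else 0) + (if F s = e then b s else 0))) * 5 ^ e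
      = a t * 5 ^ E t + b t * 5 ^ F t := by
  have hG : ∀ e ∈ S, (∑ s, ((if E s = e then a s else 0) + (if F s = e then b s else 0)))
      = ((if E t = e then a t else 0) + (if F t = e then b t else 0)) := by
    intro e he
    apply Finset.sum_eq_single t
    · intro s _ hst
      obtain ⟨nn, hnn⟩ := hS e he
      have hE0 : E s ≠ e := by
        intro hEs
        obtain ⟨ms, hms⟩ := hEc s
        exact hst (class_eq (by rw [← hms, hEs, hnn])).1
      have hF0 : F s ≠ e := by
        intro hFs
        obtain ⟨ms, hms⟩ := hFc s
        exact hst (class_eq (by rw [← hms, hFs, hnn])).1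
      rw [if_neg hE0, if_neg hF0, add_zero]
    · intro hm; exact absurd (Finset.mem_univ t) hm
  calc ∑ e ∈ S, (∑ s, ((if E s = e then a s else 0) + (if F s = e then b s else 0))) * 5 ^ e
      = ∑ e ∈ S, ((if E t = e then a t * 5 ^ e else 0) + (if F t = e then b t * 5 ^ e else 0)) := by
        refine Finset.sum_congr rfl fun e he => ?_
        rw [hG e he]
        split_ifs <;> ring
  _ = a t * 5 ^ E t + b t * 5 ^ F t := by
        rw [Finset.sum_add_distrib, Finset.sum_ite_eq, Finset.sum_ite_eq,
          if_pos hEmem, if_pos hFmem]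

lemma abs_sum_ite_le {d : ℕ} (E : Fin d → ℕ) (hE : Function.Injective E) (w : Fin d → ℤ)
    (hw : ∀ t, w t = 1 ∨ w t = -1) (e : ℕ) : |∑ t, if E t = e then w t else 0| ≤ 1 := by
  by_cases h : ∃ t, E t = e
  · obtain ⟨t0, ht0⟩ := h
    rw [Finset.sum_eq_single t0]
    · rw [if_pos ht0]; rcases hw t0 with h' | h' <;> rw [h'] <;> norm_num
    · intro b _ hb
      have : E b ≠ e := fun hbe => hb (hE (hbe.trans ht0.symm))
      rw [if_neg this]
    · intro hm; exact absurd (Finset.mem_univ t0) hm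
  · push_neg at h
    rw [Finset.sum_eq_zero (fun t _ => if_neg (h t))]
    norm_num

section Main

variable {d : ℕ} (hd : 0 < d) (M : Matrix (Fin d) (Fin ((d + 1) / 2)) ℤ)
  (hMpos : ∀ i j, 0 < M i j)
  (hMinv : ∀ rows : Fin ((d + 1) / 2) → Fin d, Function.Injective rows →
      ((M.submatrix rows id).map ((↑) : ℤ → ℚ)).det ≠ 0)
  {k : ℕ} (v : Fin k → Fin d → ℤ) (hv : ∀ i t, v i t = 1 ∨ v i t = -1)
  (hzeros : ∀ i j, i ≠ j → 2 * (Finset.univ.filter fun t => v i t + v j t = 0).card > d)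

include hd hMpos hMinv hv hzeros in
lemma S_small (i1 j1 : Fin k) (y1 z1 : Fin ((d + 1) / 2) → ℤ)
    (hy1 : ∀ i, 0 < y1 i) (hz1 : ∀ i, 0 < z1 i)
    (hne : phi d (M.mulVec y1) ⬝ᵥ v i1 ≠ phi d (M.mulVec z1) ⬝ᵥ v j1) :
    (Finset.univ.filter fun t => M.mulVec y1 t = M.mulVec z1 t ∧ v i1 t = v j1 t).card
      < (d + 1) / 2 := by
  set Sf := Finset.univ.filter fun t => M.mulVec y1 t = M.mulVec z1 t ∧ v i1 t = v j1 t with hSf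
  by_cases hij : i1 = j1
  · by_contra hc
    push_neg at hc
    have hyz : y1 = z1 := by
      refine rows_eq M hMinv Sf hc y1 z1 ?_
      intro t ht
      rw [hSf, Finset.mem_filter] at ht
      exact ht.2.1
    exact hne (by rw [hij, hyz])
  · have h0 := hzeros i1 j1 hij
    have hsub : Sf ⊆ Finset.univ.filter fun t => v i1 t = v j1 t := by
      intro t ht
      rw [hSf, Finset.mem_filter] at ht
      rw [Finset.mem_filter]
      exact ⟨ht.1, ht.2.2⟩
    have hdisj : Disjoint (Finset.univ.filter fun t => v i1 t = v j1 t)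
        (Finset.univ.filter fun t => v i1 t + v j1 t = 0) := by
      rw [Finset.disjoint_left]
      intro t ht ht0
      rw [Finset.mem_filter] at ht ht0
      rcases hv i1 t with h' | h' <;> omega
    have hcard := Finset.card_union_of_disjoint hdisj
    have hle : ((Finset.univ.filter fun t => v i1 t = v j1 t)
        ∪ Finset.univ.filter fun t => v i1 t + v j1 t = 0).card ≤ d := by
      calc _ ≤ (Finset.univ : Finset (Fin d)).card := Finset.card_le_univ _
      _ = d := by rw [Finset.card_univ, Fintype.card_fin]
    have hsubc := Finset.card_le_card hsub
    omega

include hd hMpos hMinv hv hzeros in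
set_option maxHeartbeats 1600000 in
lemma dichotomy (i1 j1 i2 j2 : Fin k) (y1 z1 y2 z2 : Fin ((d + 1) / 2) → ℤ)
    (hy1 : ∀ i, 0 < y1 i) (hz1 : ∀ i, 0 < z1 i) (hy2 : ∀ i, 0 < y2 i) (hz2 : ∀ i, 0 < z2 i)
    (hne : phi d (M.mulVec y1) ⬝ᵥ v i1 ≠ phi d (M.mulVec z1) ⬝ᵥ v j1)
    (heq : phi d (M.mulVec y1) ⬝ᵥ v i1 - phi d (M.mulVec z1) ⬝ᵥ v j1
         = phi d (M.mulVec y2) ⬝ᵥ v i2 - phi d (M.mulVec z2) ⬝ᵥ v j2) :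
    (i2 = i1 ∧ j2 = j1 ∧ y2 = y1 ∧ z2 = z1) ∨
    (y2 = z1 ∧ z2 = y1 ∧ ∀ t : Fin d, ¬(M.mulVec y1 t = M.mulVec z1 t ∧ v i1 t = v j1 t) →
      v i2 t = -(v j1 t) ∧ v j2 t = -(v i1 t)) := by
  set u1 := M.mulVec y1 with hu1def
  set w1 := M.mulVec z1 with hw1def
  set u2 := M.mulVec y2 with hu2def
  set w2 := M.mulVec z2 with hw2def
  have hu1 : ∀ t, 1 ≤ u1 t := fun t => one_le_mulVec hd M hMpos y1 hy1 t
  have hw1 : ∀ t, 1 ≤ w1 t := fun t => one_le_mulVec hd M hMpos z1 hz1 t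
  have hu2 : ∀ t, 1 ≤ u2 t := fun t => one_le_mulVec hd M hMpos y2 hy2 t
  have hw2 : ∀ t, 1 ≤ w2 t := fun t => one_le_mulVec hd M hMpos z2 hz2 t
  set E1 : Fin d → ℕ := fun t => (t : ℕ) + 1 + d * (u1 t).toNat with hE1
  set F1 : Fin d → ℕ := fun t => (t : ℕ) + 1 + d * (w1 t).toNat with hF1
  set E2 : Fin d → ℕ := fun t => (t : ℕ) + 1 + d * (u2 t).toNat with hE2
  set F2 : Fin d → ℕ := fun t => (t : ℕ) + 1 + d * (w2 t).toNat with hF2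
  -- the σ-equations, one for each coordinate t
  have hsigma : ∀ t, v i1 t * 5 ^ E1 t + v j2 t * 5 ^ F2 t
      = v i2 t * 5 ^ E2 t + v j1 t * 5 ^ F1 t := by
    have hdot : ∀ (u : Fin d → ℤ) (hu : ∀ t, 1 ≤ u t) (E : Fin d → ℕ)
        (hE : ∀ t, E t = (t : ℕ) + 1 + d * (u t).toNat) (i : Fin k),
        phi d u ⬝ᵥ v i = ∑ t, v i t * 5 ^ E t := by
      intro u hu E hE i
      unfold dotProduct
      exact Finset.sum_congr rfl fun t _ => by rw [phi_exp u hu t, mul_comm, hE t]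
    obtain ⟨N, hN⟩ : ∃ N, ∀ t, E1 t < N ∧ F1 t < N ∧ E2 t < N ∧ F2 t < N := by
      refine ⟨(Finset.univ.sup fun t => E1 t + F1 t + E2 t + F2 t) + 1, fun t => ?_⟩
      have h := Finset.le_sup (s := (Finset.univ : Finset (Fin d)))
        (f := fun s => E1 s + F1 s + E2 s + F2 s) (Finset.mem_univ t)
      omega
    have heq' : ∑ t, (v i1 t * 5 ^ E1 t + v j2 t * 5 ^ F2 t)
        = ∑ t, (v i2 t * 5 ^ E2 t + v j1 t * 5 ^ F1 t) := by
      rw [Finset.sum_add_distrib, Finset.sum_add_distrib]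
      rw [hdot u1 hu1 E1 (fun t => by rw [hE1]) i1, hdot w1 hw1 F1 (fun t => by rw [hF1]) j1,
        hdot u2 hu2 E2 (fun t => by rw [hE2]) i2, hdot w2 hw2 F2 (fun t => by rw [hF2]) j2] at heq
      linarith
    have hsumrep : ∀ (E F : Fin d → ℕ) (a b : Fin d → ℤ), (∀ t, E t < N) → (∀ t, F t < N) →
        ∑ e ∈ Finset.range N,
            (∑ t, ((if E t = e then a t else 0) + (if F t = e then b t else 0))) * 5 ^ e
          = ∑ t, (a t * 5 ^ E t + b t * 5 ^ F t) := by
      intro E F a b hE hF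
      calc ∑ e ∈ Finset.range N,
            (∑ t, ((if E t = e then a t else 0) + (if F t = e then b t else 0))) * 5 ^ e
          = ∑ e ∈ Finset.range N,
            ∑ t, ((if E t = e then a t else 0) + (if F t = e then b t else 0)) * 5 ^ e := by
            exact Finset.sum_congr rfl fun e _ => Finset.sum_mul ..
      _ = ∑ t, ∑ e ∈ Finset.range N,
            ((if E t = e then a t else 0) + (if F t = e then b t else 0)) * 5 ^ e :=
            Finset.sum_comm
      _ = ∑ t, (a t * 5 ^ E t + b t * 5 ^ F t) :=
            Finset.sum_congr rfl fun t _ => sum_two_ind (a t) (b t) (hE t) (hF t)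
    have hinj : ∀ (u : Fin d → ℤ) (E : Fin d → ℕ)
        (hE : ∀ t, E t = (t : ℕ) + 1 + d * (u t).toNat), Function.Injective E := by
      intro u E hE s t h
      rw [hE s, hE t] at h
      exact (class_eq h).1
    have hGb : ∀ e, |∑ t, ((if E1 t = e then v i1 t else 0) + (if F2 t = e then v j2 t else 0))| ≤ 2 := by
      intro e
      rw [Finset.sum_add_distrib]
      have b1 := abs_sum_ite_le E1 (hinj u1 E1 (fun t => by rw [hE1])) (v i1) (fun t => hv i1 t) e
      have b2 := abs_sum_ite_le F2 (hinj w2 F2 (fun t => by rw [hF2])) (v j2) (fun t => hv j2 t) e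
      have b3 := abs_add_le (∑ t, if E1 t = e then v i1 t else 0)
        (∑ t, if F2 t = e then v j2 t else 0)
      linarith
    have hHb : ∀ e, |∑ t, ((if E2 t = e then v i2 t else 0) + (if F1 t = e then v j1 t else 0))| ≤ 2 := by
      intro e
      rw [Finset.sum_add_distrib]
      have b1 := abs_sum_ite_le E2 (hinj u2 E2 (fun t => by rw [hE2])) (v i2) (fun t => hv i2 t) e
      have b2 := abs_sum_ite_le F1 (hinj w1 F1 (fun t => by rw [hF1])) (v j1) (fun t => hv j1 t) e
      have b3 := abs_add_le (∑ t, if E2 t = e then v i2 t else 0)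
        (∑ t, if F1 t = e then v j1 t else 0)
      linarith
    have key := five_unique N
      (fun e => ∑ t, ((if E1 t = e then v i1 t else 0) + (if F2 t = e then v j2 t else 0)))
      (fun e => ∑ t, ((if E2 t = e then v i2 t else 0) + (if F1 t = e then v j1 t else 0)))
      hGb hHb
      (by rw [hsumrep E1 F2 (v i1) (v j2) (fun t => (hN t).1) (fun t => (hN t).2.2.2),
        hsumrep E2 F1 (v i2) (v j1) (fun t => (hN t).2.2.1) (fun t => (hN t).2.1)]; exact heq')
    intro t
    set Se : Finset ℕ := {E1 t, F2 t, E2 t, F1 t} with hSe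
    have hmem : E1 t ∈ Se ∧ F2 t ∈ Se ∧ E2 t ∈ Se ∧ F1 t ∈ Se := by
      refine ⟨?_, ?_, ?_, ?_⟩ <;> simp [hSe]
    have hSlt : ∀ e ∈ Se, e < N := by
      intro e he
      rw [hSe] at he
      simp only [Finset.mem_insert, Finset.mem_singleton] at he
      have := hN t
      rcases he with rfl | rfl | rfl | rfl <;> omega
    have hScls : ∀ e ∈ Se, ∃ nn, e = (t : ℕ) + 1 + d * nn := by
      intro e he
      rw [hSe] at he
      simp only [Finset.mem_insert, Finset.mem_singleton] at he
      rcases he with rfl | rfl | rfl | rfl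
      · exact ⟨(u1 t).toNat, by rw [hE1]⟩
      · exact ⟨(w2 t).toNat, by rw [hF2]⟩
      · exact ⟨(u2 t).toNat, by rw [hE2]⟩
      · exact ⟨(w1 t).toNat, by rw [hF1]⟩
    have h1 := class_sum E1 F2 (v i1) (v j2) t Se hScls
      (fun s => ⟨(u1 s).toNat, by rw [hE1]⟩) (fun s => ⟨(w2 s).toNat, by rw [hF2]⟩)
      hmem.1 hmem.2.1
    have h2 := class_sum E2 F1 (v i2) (v j1) t Se hScls
      (fun s => ⟨(u2 s).toNat, by rw [hE2]⟩) (fun s => ⟨(w1 s).toNat, by rw [hF1]⟩)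
      hmem.2.2.1 hmem.2.2.2
    have h12 : ∑ e ∈ Se, (∑ s, ((if E1 s = e then v i1 s else 0) + (if F2 s = e then v j2 s else 0))) * 5 ^ e
        = ∑ e ∈ Se, (∑ s, ((if E2 s = e then v i2 s else 0) + (if F1 s = e then v j1 s else 0))) * 5 ^ e := by
      refine Finset.sum_congr rfl fun e he => ?_
      have k' := key e (hSlt e he)
      rw [k']
    rw [← h1, h12, h2]
  -- the pointwise trichotomy
  have htri : ∀ t, (u1 t = u2 t ∧ w2 t = w1 t ∧ v i1 t = v i2 t ∧ v j2 t = v j1 t)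
      ∨ (u1 t = w1 t ∧ v i1 t = v j1 t ∧ u2 t = w2 t ∧ v i2 t = v j2 t)
      ∨ (u1 t = w2 t ∧ u2 t = w1 t ∧ v i1 t = -(v j2 t) ∧ v i2 t = -(v j1 t)) := by
    intro t
    have conv : ∀ (X Y : Fin d → ℤ), 1 ≤ X t → 1 ≤ Y t →
        (t : ℕ) + 1 + d * (X t).toNat = (t : ℕ) + 1 + d * (Y t).toNat → X t = Y t := by
      intro X Y hX hY h
      have := (class_eq (s := t) (t := t) h).2
      omega
    rcases PT (hv i1 t) (hv j2 t) (hv i2 t) (hv j1 t) (hsigma t) with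
      ⟨hAC, hBD, he13, he24⟩ | ⟨hAD, hBC, he14, he23⟩ | ⟨hABe, he12, hCDe, he34⟩
    · rw [hE1, hE2] at hAC
      rw [hF2, hF1] at hBD
      exact Or.inl ⟨conv u1 u2 (hu1 t) (hu2 t) hAC, conv w2 w1 (hw2 t) (hw1 t) hBD, he13, he24⟩
    · rw [hE1, hF1] at hAD
      rw [hF2, hE2] at hBC
      exact Or.inr (Or.inl ⟨conv u1 w1 (hu1 t) (hw1 t) hAD, he14,
        (conv w2 u2 (hw2 t) (hu2 t) hBC).symm, he23.symm⟩)
    · rw [hE1, hF2] at hABe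
      rw [hE2, hF1] at hCDe
      exact Or.inr (Or.inr ⟨conv u1 w2 (hu1 t) (hw2 t) hABe, conv u2 w1 (hu2 t) (hw1 t) hCDe,
        he12, he34⟩)
  clear hsigma heq
  -- the zero-set of the difference
  set Sf := Finset.univ.filter fun t => u1 t = w1 t ∧ v i1 t = v j1 t with hSf
  have hSsmall : Sf.card < (d + 1) / 2 := S_small hd M hMpos hMinv v hv hzeros i1 j1 y1 z1 hy1 hz1 hne
  have hScc : (Finset.univ \ Sf).card = d - Sf.card := by
    rw [Finset.card_sdiff_of_subset (Finset.subset_univ Sf), Finset.card_univ, Fintype.card_fin]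
  have hScge : (d + 1) / 2 ≤ (Finset.univ \ Sf).card := by omega
  have hScgt : 2 * (Finset.univ \ Sf).card > d := by omega
  have hmemSc : ∀ t, t ∈ Finset.univ \ Sf ↔ ¬(u1 t = w1 t ∧ v i1 t = v j1 t) := by
    intro t
    rw [Finset.mem_sdiff, hSf, Finset.mem_filter]
    simp [Finset.mem_univ]
  -- step 2 : sums are equal
  have hyz : y1 + z1 = y2 + z2 := by
    refine rows_eq M hMinv (Finset.univ \ Sf) hScge _ _ ?_
    intro t ht
    rw [Matrix.mulVec_add, Matrix.mulVec_add]
    simp only [Pi.add_apply]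
    rw [← hu1def, ← hw1def, ← hu2def, ← hw2def]
    have hts := (hmemSc t).1 ht
    rcases htri t with ⟨h1, h2, _, _⟩ | ⟨h1, h2, _, _⟩ | ⟨h1, h2, _, _⟩
    · omega
    · exact absurd ⟨h1, h2⟩ hts
    · omega
  have huw : ∀ t, u1 t + w1 t = u2 t + w2 t := by
    intro t
    have := congrFun (congrArg M.mulVec hyz) t
    rw [Matrix.mulVec_add, Matrix.mulVec_add] at this
    simp only [Pi.add_apply] at this
    rw [← hu1def, ← hw1def, ← hu2def, ← hw2def] at this
    exact this
  have hS2 : ∀ t, u1 t = w1 t → u2 t = w2 t := by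
    intro t h
    rcases htri t with ⟨h1, h2, _, _⟩ | ⟨_, _, h3, _⟩ | ⟨h1, h2, _, _⟩
    · omega
    · exact h3
    · omega
  -- the two alignment sets
  set DA := Finset.univ.filter (fun t => ¬u1 t = w1 t ∧ u1 t = u2 t) with hDA
  set DB := Finset.univ.filter (fun t => ¬u1 t = w1 t ∧ u1 t = w2 t) with hDB
  have hdisj : Disjoint DA DB := by
    rw [Finset.disjoint_left]
    intro t htA htB
    rw [hDA, Finset.mem_filter] at htA
    rw [hDB, Finset.mem_filter] at htB
    have := huw t
    omega
  have hcover : ∀ t, ¬u1 t = w1 t → t ∈ DA ∨ t ∈ DB := by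
    intro t h
    rcases htri t with ⟨h1, _, _, _⟩ | ⟨h1, h2, _, _⟩ | ⟨h1, _, _, _⟩
    · exact Or.inl (by rw [hDA, Finset.mem_filter]; exact ⟨Finset.mem_univ t, h, h1⟩)
    · exact absurd h1 h
    · exact Or.inr (by rw [hDB, Finset.mem_filter]; exact ⟨Finset.mem_univ t, h, h1⟩)
  have hcards : DA.card + DB.card ≤ d := by
    have := Finset.card_union_of_disjoint hdisj
    have hle : (DA ∪ DB).card ≤ d := by
      calc _ ≤ (Finset.univ : Finset (Fin d)).card := Finset.card_le_univ _
      _ = d := by rw [Finset.card_univ, Fintype.card_fin]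
    omega
  rcases (show DB.card ≤ d - (d + 1) / 2 ∨ DA.card ≤ d - (d + 1) / 2 by omega) with hcB | hcA
  · -- aligned case
    have hTcard : (d + 1) / 2 ≤ (Finset.univ \ DB).card := by
      rw [Finset.card_sdiff_of_subset (Finset.subset_univ DB), Finset.card_univ, Fintype.card_fin]
      omega
    have hw12 : y1 - z1 = y2 - z2 := by
      refine rows_eq M hMinv (Finset.univ \ DB) hTcard _ _ ?_
      intro t ht
      rw [Matrix.mulVec_sub, Matrix.mulVec_sub]
      simp only [Pi.sub_apply]
      rw [← hu1def, ← hw1def, ← hu2def, ← hw2def]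
      rw [Finset.mem_sdiff, hDB, Finset.mem_filter] at ht
      by_cases h0 : u1 t = w1 t
      · have := hS2 t h0
        omega
      · rcases hcover t h0 with hA' | hB'
        · rw [hDA, Finset.mem_filter] at hA'
          have := huw t
          omega
        · exact absurd hB' (by rw [hDB, Finset.mem_filter]; tauto)
    have hy12 : y2 = y1 := by
      funext a
      have h1 := congrFun hyz a
      have h2 := congrFun hw12 a
      simp only [Pi.add_apply, Pi.sub_apply] at h1 h2
      omega
    have hz12 : z2 = z1 := by
      funext a
      have h1 := congrFun hyz a
      have h2 := congrFun hw12 a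
      simp only [Pi.add_apply, Pi.sub_apply] at h1 h2
      omega
    have hw21 : ∀ t, w2 t = w1 t := by
      intro t
      rw [hw2def, hw1def, hz12]
    have hsigns : ∀ t, ¬(u1 t = w1 t ∧ v i1 t = v j1 t) →
        v i1 t = v i2 t ∧ v j1 t = v j2 t := by
      intro t hts
      rcases htri t with ⟨_, _, h3, h4⟩ | ⟨a, b, _, _⟩ | ⟨s1, s2, s3, s4⟩
      · exact ⟨h3, h4.symm⟩
      · exact absurd ⟨a, b⟩ hts
      · have h0 : u1 t = w1 t := by rw [s1, hw21 t]
        have hne' : ¬v i1 t = v j1 t := fun hc => hts ⟨h0, hc⟩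
        rcases hv i1 t with q1 | q1 <;> rcases hv j1 t with q2 | q2 <;>
          rcases hv i2 t with q3 | q3 <;> rcases hv j2 t with q4 | q4 <;> omega
    have hi : i2 = i1 := by
      refine index_eq v hv hzeros i2 i1 (Finset.univ \ Sf) hScgt ?_
      intro t ht
      exact ((hsigns t ((hmemSc t).1 ht)).1).symm
    have hj : j2 = j1 := by
      refine index_eq v hv hzeros j2 j1 (Finset.univ \ Sf) hScgt ?_
      intro t ht
      exact ((hsigns t ((hmemSc t).1 ht)).2).symm
    exact Or.inl ⟨hi, hj, hy12, hz12⟩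
  · -- swapped case
    have hTcard : (d + 1) / 2 ≤ (Finset.univ \ DA).card := by
      rw [Finset.card_sdiff_of_subset (Finset.subset_univ DA), Finset.card_univ, Fintype.card_fin]
      omega
    have hw12 : y1 - z1 = z2 - y2 := by
      refine rows_eq M hMinv (Finset.univ \ DA) hTcard _ _ ?_
      intro t ht
      rw [Matrix.mulVec_sub, Matrix.mulVec_sub]
      simp only [Pi.sub_apply]
      rw [← hu1def, ← hw1def, ← hu2def, ← hw2def]
      rw [Finset.mem_sdiff, hDA, Finset.mem_filter] at ht
      by_cases h0 : u1 t = w1 t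
      · have := hS2 t h0
        omega
      · rcases hcover t h0 with hA' | hB'
        · exact absurd hA' (by rw [hDA, Finset.mem_filter]; tauto)
        · rw [hDB, Finset.mem_filter] at hB'
          have := huw t
          omega
    have hy2z1 : y2 = z1 := by
      funext a
      have h1 := congrFun hyz a
      have h2 := congrFun hw12 a
      simp only [Pi.add_apply, Pi.sub_apply] at h1 h2
      omega
    have hz2y1 : z2 = y1 := by
      funext a
      have h1 := congrFun hyz a
      have h2 := congrFun hw12 a
      simp only [Pi.add_apply, Pi.sub_apply] at h1 h2
      omega
    have hu2w1 : ∀ t, u2 t = w1 t := by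
      intro t
      rw [hu2def, hw1def, hy2z1]
    have hsigns : ∀ t, ¬(u1 t = w1 t ∧ v i1 t = v j1 t) →
        v i2 t = -(v j1 t) ∧ v j2 t = -(v i1 t) := by
      intro t hts
      rcases htri t with ⟨a1, a2, a3, a4⟩ | ⟨a, b, _, _⟩ | ⟨s1, s2, s3, s4⟩
      · have h0 : u1 t = w1 t := by rw [a1, hu2w1 t]
        have hne' : ¬v i1 t = v j1 t := fun hc => hts ⟨h0, hc⟩
        rcases hv i1 t with q1 | q1 <;> rcases hv j1 t with q2 | q2 <;>
          rcases hv i2 t with q3 | q3 <;> rcases hv j2 t with q4 | q4 <;> omega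
      · exact absurd ⟨a, b⟩ hts
      · constructor
        · exact s4
        · omega
    exact Or.inr ⟨hy2z1, hz2y1, hsigns⟩

end Main

end B2Aux


theorem stmt_4 (d : ℕ) (hd : 0 < d)
    (M : Matrix (Fin d) (Fin ((d + 1) / 2)) ℤ)
    (hMpos : ∀ i j, 0 < M i j)
    (hMinv : ∀ rows : Fin ((d + 1) / 2) → Fin d, Function.Injective rows →
      ((M.submatrix rows id).map ((↑) : ℤ → ℚ)).det ≠ 0)
    (k : ℕ) (hk : 0 < k) (v : Fin k → Fin d → ℤ)
    (hv : ∀ i t, v i t = 1 ∨ v i t = -1)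
    (hzeros : ∀ i j, i ≠ j →
      2 * (Finset.univ.filter fun t => v i t + v j t = 0).card > d)
    (hdistinct : ∀ i j h l, v i + v j = v h + v l → ({i, j} : Set (Fin k)) = {h, l}) :
    IsB2Circ 2 (⋃ i, Wset d M (v i)) := by
  intro ξ hξ
  set R := {p : ℤ × ℤ | p.1 ∈ ⋃ i, Wset d M (v i) ∧ p.2 ∈ ⋃ i, Wset d M (v i) ∧ p.1 - p.2 = ξ}
    with hR
  rcases Set.eq_empty_or_nonempty R with hE | ⟨p1, hp1⟩
  · rw [hE]
    simp
  · obtain ⟨h11, h12, h13⟩ := hp1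
    rw [Set.mem_iUnion] at h11 h12
    obtain ⟨i1, hmem1⟩ := h11
    obtain ⟨j1, hmem1'⟩ := h12
    obtain ⟨y1, hy1, hx1⟩ := hmem1
    obtain ⟨z1, hz1, hx1'⟩ := hmem1'
    have hne1 : phi d (M.mulVec y1) ⬝ᵥ v i1 ≠ phi d (M.mulVec z1) ⬝ᵥ v j1 := by
      rw [← hx1, ← hx1']
      intro hc
      exact hξ (by rw [← h13, hc, sub_self])
    have hSsm := B2Aux.S_small hd M hMpos hMinv v hv hzeros i1 j1 y1 z1 hy1 hz1 hne1
    set Sf := Finset.univ.filter (fun t => M.mulVec y1 t = M.mulVec z1 t ∧ v i1 t = v j1 t)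
      with hSf
    have hScc : (Finset.univ \ Sf).card = d - Sf.card := by
      rw [Finset.card_sdiff_of_subset (Finset.subset_univ Sf), Finset.card_univ, Fintype.card_fin]
    have hScgt : 2 * (Finset.univ \ Sf).card > d := by omega
    have hmemSc : ∀ t, t ∈ Finset.univ \ Sf ↔
        ¬(M.mulVec y1 t = M.mulVec z1 t ∧ v i1 t = v j1 t) := by
      intro t
      rw [Finset.mem_sdiff, hSf, Finset.mem_filter]
      simp [Finset.mem_univ]
    have main : ∀ p ∈ R, p = p1 ∨
        ∃ i2 j2 : Fin k, p = (phi d (M.mulVec z1) ⬝ᵥ v i2, phi d (M.mulVec y1) ⬝ᵥ v j2) ∧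
          ∀ t ∈ Finset.univ \ Sf, v i2 t = -(v j1 t) ∧ v j2 t = -(v i1 t) := by
      intro p hp
      obtain ⟨hq1, hq2, hq3⟩ := hp
      rw [Set.mem_iUnion] at hq1 hq2
      obtain ⟨i2, hm2⟩ := hq1
      obtain ⟨j2, hm2'⟩ := hq2
      obtain ⟨y2, hy2, hx2⟩ := hm2
      obtain ⟨z2, hz2, hx2'⟩ := hm2'
      have heq2 : phi d (M.mulVec y1) ⬝ᵥ v i1 - phi d (M.mulVec z1) ⬝ᵥ v j1
          = phi d (M.mulVec y2) ⬝ᵥ v i2 - phi d (M.mulVec z2) ⬝ᵥ v j2 := by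
        rw [← hx1, ← hx1', ← hx2, ← hx2', h13, hq3]
      rcases B2Aux.dichotomy hd M hMpos hMinv v hv hzeros i1 j1 i2 j2 y1 z1 y2 z2 hy1 hz1
        hy2 hz2 hne1 heq2 with ⟨hi, hj, hy, hz⟩ | ⟨hyz, hzy, hsg⟩
      · left
        have e1 : p.1 = p1.1 := by rw [hx2, hx1, hi, hy]
        have e2 : p.2 = p1.2 := by rw [hx2', hx1', hj, hz]
        exact Prod.ext e1 e2
      · right
        refine ⟨i2, j2, ?_, fun t ht => hsg t ((hmemSc t).1 ht)⟩
        have e1 : p.1 = phi d (M.mulVec z1) ⬝ᵥ v i2 := by rw [hx2, hyz]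
        have e2 : p.2 = phi d (M.mulVec y1) ⬝ᵥ v j2 := by rw [hx2', hzy]
        exact Prod.ext e1 e2
    by_cases hsw : ∃ p ∈ R, ∃ i2 j2 : Fin k,
        p = (phi d (M.mulVec z1) ⬝ᵥ v i2, phi d (M.mulVec y1) ⬝ᵥ v j2) ∧
          ∀ t ∈ Finset.univ \ Sf, v i2 t = -(v j1 t) ∧ v j2 t = -(v i1 t)
    · obtain ⟨p2, _, i2, j2, hp2eq, hp2sg⟩ := hsw
      have hsub : R ⊆ {p1, p2} := by
        intro p hp
        rcases main p hp with h | ⟨i3, j3, hp3eq, hp3sg⟩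
        · exact Or.inl h
        · right
          have hi : i3 = i2 := by
            refine B2Aux.index_eq v hv hzeros i3 i2 (Finset.univ \ Sf) hScgt ?_
            intro t ht
            have a1 := (hp3sg t ht).1
            have a2 := (hp2sg t ht).1
            rw [a1, a2]
          have hj : j3 = j2 := by
            refine B2Aux.index_eq v hv hzeros j3 j2 (Finset.univ \ Sf) hScgt ?_
            intro t ht
            have a1 := (hp3sg t ht).2
            have a2 := (hp2sg t ht).2
            rw [a1, a2]
          rw [hp3eq, hp2eq, hi, hj]
          rfl
      calc R.encard ≤ ({p1, p2} : Set (ℤ × ℤ)).encard := Set.encard_mono hsub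
      _ ≤ ({p2} : Set (ℤ × ℤ)).encard + 1 := Set.encard_insert_le _ _
      _ ≤ 2 := by rw [Set.encard_singleton]; norm_num
    · have hsub : R ⊆ {p1} := by
        intro p hp
        rcases main p hp with h | ⟨i3, j3, hp3eq, hp3sg⟩
        · exact h
        · exact absurd ⟨p, hp, i3, j3, hp3eq, hp3sg⟩ hsw
      calc R.encard ≤ ({p1} : Set (ℤ × ℤ)).encard := Set.encard_mono hsub
      _ ≤ 2 := by rw [Set.encard_singleton]; norm_num
end
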